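/- arXiv:0708.1919 — 4 statements merged into one kernel-verified Lean document; each statement's English description precedes it below -/
import Mathlib

section
/- Let κ : [0,1]² → [0,∞) be a kernel and C ≥ 0 a constant. Then s(F,κ) ≤ C^{e(F)} for every finite simple graph F if and only if κ(x,y) ≤ C for almost every (x,y) ∈ [0,1]², where e(F) is the number of edges of F. -/
open MeasureTheory Set Filter
open scoped ENNReal Classical

noncomputable section

/-- The (0-based) index of the subinterval `((i)/n, (i+1)/n]` of `[0,1]` containing `x`. -/
def idx (n : ℕ) (x : ℝ) : ℕ := ⌈x * n⌉₊ - 1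

/-- The subset of `[0,1]` corresponding to a set of vertices of a graph on `Fin n`:
the union of the intervals `(i/n, (i+1)/n]` for `i ∈ X` (vertices `0`-indexed). -/
def vtxSet (n : ℕ) (X : Finset (Fin n)) : Set ℝ :=
  ⋃ i ∈ X, Ioc ((i : ℝ) / n) (((i : ℝ) + 1) / n)

/-- The kernel associated to a graph `G` on `{1,…,n}` and normalizing constant `p`:
it takes the value `1/p` on `((i−1)/n, i/n] × ((j−1)/n, j/n]` whenever `ij ∈ E(G)`,
and `0` elsewhere. -/
def graphKernel {n : ℕ} (p : ℝ) (G : SimpleGraph (Fin n)) : ℝ → ℝ → ℝ := fun x y =>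
  if h : x ∈ Ioc (0:ℝ) 1 ∧ y ∈ Ioc (0:ℝ) 1 ∧ idx n x < n ∧ idx n y < n then
    (if G.Adj ⟨idx n x, h.2.2.1⟩ ⟨idx n y, h.2.2.2⟩ then 1 / p else 0)
  else 0

/-- The cut norm of `W : [0,1]² → ℝ`. -/
def cutNorm (W : ℝ → ℝ → ℝ) : ℝ :=
  sSup {r | ∃ S T : Set ℝ, MeasurableSet S ∧ MeasurableSet T ∧
    S ⊆ Icc 0 1 ∧ T ⊆ Icc 0 1 ∧ r = |∫ q in S ×ˢ T, W q.1 q.2|}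

/-- `τ` is a Lebesgue-measure-preserving bijection of `[0,1]`. -/
def MPBij (τ : ℝ → ℝ) : Prop :=
  MeasurePreserving τ (volume.restrict (Icc 0 1)) (volume.restrict (Icc 0 1)) ∧
    BijOn τ (Icc 0 1) (Icc 0 1)

/-- The cut distance between two kernels. -/
def cutDist (κ₁ κ₂ : ℝ → ℝ → ℝ) : ℝ :=
  sInf {r | ∃ τ : ℝ → ℝ, MPBij τ ∧ r = cutNorm (fun x y => κ₁ x y - κ₂ (τ x) (τ y))}

/-- The number of homomorphisms from `F` to `G`. -/
def homCount {α β : Type*} (F : SimpleGraph α) (G : SimpleGraph β) : ℕ :=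
  Nat.card (F →g G)

/-- The number of injective homomorphisms (embeddings) from `F` to `G`. -/
def embCount {α β : Type*} (F : SimpleGraph α) (G : SimpleGraph β) : ℕ :=
  Nat.card {φ : F →g G // Function.Injective φ}

/-- The number of edges of a graph. -/
def edgeCount {α : Type*} (F : SimpleGraph α) : ℕ := Nat.card F.edgeSet

/-- The normalized homomorphism count `t_p(F,G)`. -/
def tDen {α β : Type*} [Fintype α] [Fintype β] (p : ℝ) (F : SimpleGraph α)
    (G : SimpleGraph β) : ℝ :=
  homCount F G / (p ^ edgeCount F * (Fintype.card β : ℝ) ^ Fintype.card α)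

/-- The normalized embedding count `s_p(F,G)`. -/
def sDen {α β : Type*} [Fintype α] [Fintype β] (p : ℝ) (F : SimpleGraph α)
    (G : SimpleGraph β) : ℝ :=
  embCount F G / (p ^ edgeCount F * ((Fintype.card β).descFactorial (Fintype.card α) : ℝ))

/-- The homomorphism density `s(F,κ)` of a finite graph in a kernel. -/
def homDensity {α : Type*} [Fintype α] (F : SimpleGraph α) (κ : ℝ → ℝ → ℝ) : ℝ :=
  ∫ x in Set.univ.pi (fun _ : α => Icc (0:ℝ) 1),
    ∏ e ∈ F.edgeFinset,
      Sym2.lift ⟨fun i j => (κ (x i) (x j) + κ (x j) (x i)) / 2,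
        fun i j => by dsimp only; rw [add_comm (κ (x i) (x j)) (κ (x j) (x i))]⟩ e

/-- The homomorphism density as a lower integral (for possibly unbounded kernels). -/
def homDensityL {α : Type*} [Fintype α] (F : SimpleGraph α) (κ : ℝ → ℝ → ℝ) : ℝ≥0∞ :=
  ∫⁻ x in Set.univ.pi (fun _ : α => Icc (0:ℝ) 1),
    ∏ e ∈ F.edgeFinset,
      Sym2.lift ⟨fun i j => ENNReal.ofReal ((κ (x i) (x j) + κ (x j) (x i)) / 2),
        fun i j => by dsimp only; rw [add_comm (κ (x i) (x j)) (κ (x j) (x i))]⟩ e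

/-- A kernel: a symmetric measurable function `[0,1]² → [0,∞)`. -/
def IsKernel (κ : ℝ → ℝ → ℝ) : Prop :=
  Measurable (Function.uncurry κ) ∧ (∀ x y, κ x y = κ y x) ∧ ∀ x y, 0 ≤ κ x y

/-- A kernel taking values in `[0,C]`. -/
def IsKernelBdd (κ : ℝ → ℝ → ℝ) (C : ℝ) : Prop :=
  Measurable (Function.uncurry κ) ∧ (∀ x y, κ x y = κ y x) ∧ ∀ x y, κ x y ∈ Icc 0 C

/-- A standard kernel: a symmetric measurable function `[0,1]² → [0,1]`. -/
def IsStdKernel (κ : ℝ → ℝ → ℝ) : Prop := IsKernelBdd κ 1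

/-- A doubly stochastic measure: a Borel measure on `[0,1]²` both of whose marginals
are Lebesgue measure on `[0,1]`. -/
def IsDoublyStochastic (μ : Measure (ℝ × ℝ)) : Prop :=
  μ.map Prod.fst = volume.restrict (Icc 0 1) ∧ μ.map Prod.snd = volume.restrict (Icc 0 1)

/-- The quantity `d_μ(κ₁,κ₂)`. -/
def dMu (μ : Measure (ℝ × ℝ)) (κ₁ κ₂ : ℝ → ℝ → ℝ) : ℝ :=
  sSup {r | ∃ S T : Set (ℝ × ℝ), MeasurableSet S ∧ MeasurableSet T ∧
    S ⊆ Icc 0 1 ×ˢ Icc 0 1 ∧ T ⊆ Icc 0 1 ×ˢ Icc 0 1 ∧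
    r = |∫ w in S ×ˢ T, (κ₁ w.1.1 w.2.1 - κ₂ w.1.2 w.2.2) ∂(μ.prod μ)|}

/-- Equivalence of kernels via a coupling. -/
def KernelEquiv (κ₁ κ₂ : ℝ → ℝ → ℝ) : Prop :=
  ∃ μ : Measure (ℝ × ℝ), IsDoublyStochastic μ ∧
    ∀ᵐ w ∂(μ.prod μ), κ₁ w.1.1 w.2.1 = κ₂ w.1.2 w.2.2

/-- `e_G(A,B)`: the number of ordered pairs `(i,j) ∈ A × B` with `ij ∈ E(G)`. -/
def ePairs {n : ℕ} (G : SimpleGraph (Fin n)) (A B : Finset (Fin n)) : ℕ :=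
  ((A ×ˢ B).filter fun q => G.Adj q.1 q.2).card

/-- The normalized density `d_p(A,B)`. -/
def dDens {n : ℕ} (p : ℝ) (G : SimpleGraph (Fin n)) (A B : Finset (Fin n)) : ℝ :=
  ePairs G A B / (p * A.card * B.card)

/-- A sequence of graphs has density bounded by `C`. -/
def DensityBoundedBy (p : ℕ → ℝ) (G : ∀ n, SimpleGraph (Fin n)) (C : ℝ) : Prop :=
  ∀ ε > (0:ℝ), ∀ δ > (0:ℝ), ∀ᶠ n in atTop, ∀ A B : Finset (Fin n),
    ε * n ≤ A.card → ε * n ≤ B.card → dDens (p n) (G n) A B ≤ C + δ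

/-- The parts of a partition of `Fin n` indexed by `Fin k`, given as a colouring. -/
def fiber {n k : ℕ} (c : Fin n → Fin k) (a : Fin k) : Finset (Fin n) :=
  Finset.univ.filter fun v => c v = a

/-- The finite-type kernel `G/Π` associated to a partition of the vertex set of `G`. -/
def partKernel {n k : ℕ} (p : ℝ) (G : SimpleGraph (Fin n)) (c : Fin n → Fin k) :
    ℝ → ℝ → ℝ := fun x y =>
  if h : x ∈ Ioc (0:ℝ) 1 ∧ y ∈ Ioc (0:ℝ) 1 ∧ idx n x < n ∧ idx n y < n then
    dDens p G (fiber c (c ⟨idx n x, h.2.2.1⟩)) (fiber c (c ⟨idx n y, h.2.2.2⟩))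
  else 0

/-- A partition is weakly `(ε,p)`-regular for `G`. -/
def WeaklyRegular {n k : ℕ} (p ε : ℝ) (G : SimpleGraph (Fin n)) (c : Fin n → Fin k) : Prop :=
  cutNorm (fun x y => graphKernel p G x y - partKernel p G c x y) ≤ ε

/-- `(A,B)` is an `(ε,p)`-regular pair for `G`. -/
def RegPair {n : ℕ} (p ε : ℝ) (G : SimpleGraph (Fin n)) (A B : Finset (Fin n)) : Prop :=
  ∀ A' ⊆ A, ∀ B' ⊆ B, ε * A.card ≤ A'.card → ε * B.card ≤ B'.card →
    |dDens p G A' B' - dDens p G A B| ≤ ε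

/-- An `(ε,p)`-regular partition of `G` into `k` parts. -/
def RegPartition {n k : ℕ} (p ε : ℝ) (G : SimpleGraph (Fin n)) (c : Fin n → Fin k) : Prop :=
  (∀ a : Fin k, (fiber c a).card = n / k ∨ (fiber c a).card = n / k + 1) ∧
  ((Finset.univ.filter (fun q : Fin k × Fin k =>
      q.1 < q.2 ∧ ¬ RegPair p ε G (fiber c q.1) (fiber c q.2))).card : ℝ)
    ≤ ε * ((k : ℝ) * ((k : ℝ) - 1) / 2)

/-- The number of walks `v₀v₁⋯v_ℓ` in `G` with `v_i ∈ X_i` for each `i`. -/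
def walkCount {n ℓ : ℕ} (G : SimpleGraph (Fin n)) (X : Fin (ℓ+1) → Finset (Fin n)) : ℕ :=
  Nat.card {v : Fin (ℓ+1) → Fin n //
    (∀ i, v i ∈ X i) ∧ ∀ i : Fin ℓ, G.Adj (v i.castSucc) (v i.succ)}

/-- `κ(X₀,X₁,…,X_ℓ)`: the kernel analogue of the walk count. -/
def kernelWalk {ℓ : ℕ} (κ : ℝ → ℝ → ℝ) (X : Fin (ℓ+1) → Set ℝ) : ℝ :=
  ∫ x in Set.univ.pi X, ∏ i : Fin ℓ, κ (x i.castSucc) (x i.succ)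

/-- `p_t(u,v)`: the number of paths of length `t` in `G` from `u` to `v`. -/
def pathCount {n : ℕ} (G : SimpleGraph (Fin n)) (t : ℕ) (u v : Fin n) : ℕ :=
  Nat.card {w : Fin (t+1) → Fin n // w 0 = u ∧ w (Fin.last t) = v ∧
    Function.Injective w ∧ ∀ i : Fin t, G.Adj (w i.castSucc) (w i.succ)}

/-- The `i`-th vertex on the `r`-th subdivided edge (from `u r` to `v r`, `ℓ` steps). -/
def pv (ℓ : ℕ) {k m : ℕ} (u v : Fin m → Fin k) (r : Fin m) (i : ℕ) :
    Fin k ⊕ (Fin m × Fin (ℓ - 1)) :=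
  if h0 : i = 0 then Sum.inl (u r)
  else if h : i < ℓ then Sum.inr (r, ⟨i - 1, by omega⟩)
  else Sum.inl (v r)

/-- The `(ℓ−1)`-fold subdivision of the loopless multigraph with `k` vertices and
edges `u r — v r` for `r < m`. -/
def multiSubdiv (ℓ : ℕ) {k m : ℕ} (u v : Fin m → Fin k) :
    SimpleGraph (Fin k ⊕ (Fin m × Fin (ℓ - 1))) :=
  SimpleGraph.fromRel fun a b =>
    ∃ r : Fin m, ∃ i : ℕ, i < ℓ ∧ a = pv ℓ u v r i ∧ b = pv ℓ u v r (i + 1)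

/-- Membership in the family `F_ℓ` of `(ℓ−1)`-fold subdivisions of finite loopless
multigraphs. -/
def InFamilyF (ℓ : ℕ) {N : ℕ} (F : SimpleGraph (Fin N)) : Prop :=
  ∃ (k m : ℕ) (u v : Fin m → Fin k), 1 ≤ k ∧ (∀ r, u r ≠ v r) ∧
    Nonempty (F ≃g multiSubdiv ℓ u v)

/-- The edges of a simple graph on `Fin k`, as ordered pairs `(i,j)` with `i < j`. -/
abbrev edgeIdx {k : ℕ} (F : SimpleGraph (Fin k)) : Type :=
  {q : Fin k × Fin k // q.1 < q.2 ∧ F.Adj q.1 q.2}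

/-- The `i`-th vertex on the subdivision of the edge `e` (`t` steps). -/
def spv (t : ℕ) {k : ℕ} {F : SimpleGraph (Fin k)} (e : edgeIdx F) (i : ℕ) :
    Fin k ⊕ (edgeIdx F × Fin (t - 1)) :=
  if h0 : i = 0 then Sum.inl e.1.1
  else if h : i < t then Sum.inr (e, ⟨i - 1, by omega⟩)
  else Sum.inl e.1.2

/-- The `t`-subdivision `Sub_t(F)` of a simple graph `F`: each edge is replaced by a
path of length `t` through `t−1` new internal vertices. -/
def subdiv (t : ℕ) {k : ℕ} (F : SimpleGraph (Fin k)) :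
    SimpleGraph (Fin k ⊕ (edgeIdx F × Fin (t - 1))) :=
  SimpleGraph.fromRel fun a b =>
    ∃ e : edgeIdx F, ∃ i : ℕ, i < t ∧ a = spv t e i ∧ b = spv t e (i + 1)

/-- The `t`-th power kernel `κ^t`. -/
def kpow (κ : ℝ → ℝ → ℝ) : ℕ → ℝ → ℝ → ℝ
  | 0 => fun _ _ => 0
  | 1 => κ
  | (n + 2) => fun x y => ∫ z in Icc (0:ℝ) 1, kpow κ (n + 1) x z * κ z y

/-- `φ : Fin ℓ → Fin n` is a homomorphism from `F` to `G`. -/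
def IsHom {α β : Type*} (F : SimpleGraph α) (G : SimpleGraph β) (φ : α → β) : Prop :=
  ∀ i j, F.Adj i j → G.Adj (φ i) (φ j)

/-- `F` is flat over its induced subgraph `F'` on the first `ℓ` vertices, for the
sequence `(G_n)` with normalizing function `p`. -/
def FlatOver (p : ℕ → ℝ) (G : ∀ n, SimpleGraph (Fin n)) {k ℓ : ℕ} (h : ℓ ≤ k)
    (F : SimpleGraph (Fin k)) : Prop :=
  ∀ ε > (0:ℝ), ∀ᶠ n in atTop,
    ((Finset.univ.filter (fun φ : Fin ℓ → Fin n =>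
        IsHom (F.comap (Fin.castLE h)) (G n) φ ∧
        ε * ((n:ℝ) ^ (k - ℓ) * p n ^ (edgeCount F - edgeCount (F.comap (Fin.castLE h)))) <
          |((Finset.univ.filter (fun ψ : Fin k → Fin n =>
              IsHom F (G n) ψ ∧ ψ ∘ Fin.castLE h = φ)).card : ℝ) -
            (n:ℝ) ^ (k - ℓ) * p n ^ (edgeCount F - edgeCount (F.comap (Fin.castLE h)))|)).card
      : ℝ)
      ≤ ε * ((Finset.univ.filter (fun φ : Fin ℓ → Fin n =>
          IsHom (F.comap (Fin.castLE h)) (G n) φ)).card : ℝ)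

/-- The set of density matrices of balanced partitions of `V(G)` into `k` nonempty
parts. -/
def MsetG (k : ℕ) {n : ℕ} (p : ℝ) (G : SimpleGraph (Fin n)) : Set (Fin k → Fin k → ℝ) :=
  {M | ∃ c : Fin n → Fin k, Function.Surjective c ∧
    (∀ a b, (fiber c a).card ≤ (fiber c b).card + 1) ∧
    M = fun a b => dDens p G (fiber c a) (fiber c b)}

/-- The closed set of density matrices of partitions of `[0,1]` into `k` parts of
measure `1/k`, for a kernel `κ`. -/
def MsetK (k : ℕ) (κ : ℝ → ℝ → ℝ) : Set (Fin k → Fin k → ℝ) :=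
  closure {M | ∃ Q : Fin k → Set ℝ, (∀ a, MeasurableSet (Q a)) ∧
    (Pairwise fun a b => Disjoint (Q a) (Q b)) ∧ (⋃ a, Q a) = Icc 0 1 ∧
    (∀ a, volume (Q a) = 1 / (k : ℝ≥0∞)) ∧
    M = fun a b => (k : ℝ)^2 * ∫ q in (Q a) ×ˢ (Q b), κ q.1 q.2}

end

/-! If `κ ≤ C` almost everywhere then almost every factor of the integrand of `s(F, κ)` is at
most `C`. Conversely, if `κ ≥ D > C` on a set of positive measure, a Lebesgue density point of
that set gives a box `I × J ⊆ [0,1]²` on which `κ` has average `a > C`. Restricting the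
integral defining `s(K_{m,m}, κ)` to `I^m × J^m` and applying Jensen's inequality once on each
side gives `s(K_{m,m}, κ) ≥ (|I| |J|)^m a^{m²}`, which exceeds `C^{m²} = C^{e(K_{m,m})}` for
large `m`. -/

open ProbabilityTheory

lemma pow_lintegral_le_lintegral_pow {Ω : Type*} [MeasurableSpace Ω] {P : Measure Ω}
    [IsProbabilityMeasure P] {f : Ω → ℝ≥0∞} (hf : AEMeasurable f P) :
    ∀ n : ℕ, (∫⁻ t, f t ∂P) ^ n ≤ ∫⁻ t, f t ^ n ∂P
  | 0 => by simp
  | 1 => by simp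
  | n + 2 => by
    have hp : (1 : ℝ) < (n + 2 : ℕ) := by norm_cast; omega
    set p : ℝ := ((n + 2 : ℕ) : ℝ)
    have holder : ∫⁻ t, f t ∂P ≤ (∫⁻ t, f t ^ p ∂P) ^ (1 / p) := by
      simpa using ENNReal.lintegral_mul_le_Lp_mul_Lq P (Real.HolderConjugate.conjExponent hp) hf
        aemeasurable_const (g := fun _ => 1)
    calc (∫⁻ t, f t ∂P) ^ (n + 2) ≤ ((∫⁻ t, f t ^ p ∂P) ^ (1 / p)) ^ (n + 2) :=
          pow_le_pow_left₀ zero_le holder _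
      _ = ∫⁻ t, f t ^ (n + 2) ∂P := by
          rw [← ENNReal.rpow_natCast _ (n + 2), ← ENNReal.rpow_mul, one_div,
            inv_mul_cancel₀ (by positivity), ENNReal.rpow_one]
          simp_rw [p, ENNReal.rpow_natCast]

lemma lintegral_pi_prod_comp_eval {ι Ω : Type*} [Fintype ι] [MeasurableSpace Ω]
    (P : Measure Ω) [IsProbabilityMeasure P] {f : Ω → ℝ≥0∞} (hf : Measurable f) :
    ∫⁻ x, ∏ i, f (x i) ∂Measure.pi (fun _ : ι => P) =
      (∫⁻ t, f t ∂P) ^ Fintype.card ι := by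
  rw [lintegral_prod_eq_prod_lintegral_of_indepFun _ _
      (iIndepFun_pi (X := fun _ : ι => f) fun _ => hf.aemeasurable)
      fun i => hf.comp (measurable_pi_apply i)]
  simp_rw [(measurePreserving_eval (fun _ : ι => P) _).lintegral_comp hf]
  rw [Finset.prod_const, Finset.card_univ]

lemma pow_lintegral_le_lintegral_pi_prod {ι ι' Ω Ω' : Type*} [Fintype ι] [Fintype ι']
    [MeasurableSpace Ω] [MeasurableSpace Ω'] (P : Measure Ω) (Q : Measure Ω')
    [IsProbabilityMeasure P] [IsProbabilityMeasure Q] {f : Ω × Ω' → ℝ≥0∞}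
    (hf : Measurable f) :
    (∫⁻ z, f z ∂P.prod Q) ^ (Fintype.card ι * Fintype.card ι') ≤
      ∫⁻ z, ∏ p : ι × ι', f (z.1 p.1, z.2 p.2)
        ∂(Measure.pi fun _ : ι => P).prod (Measure.pi fun _ : ι' => Q) := by
  have hrow : Measurable fun z : (ι → Ω) × Ω' => ∏ i, f (z.1 i, z.2) := by fun_prop
  have hall : Measurable fun z : (ι → Ω) × (ι' → Ω') =>
      ∏ p : ι × ι', f (z.1 p.1, z.2 p.2) := by
    fun_prop
  calc (∫⁻ z, f z ∂P.prod Q) ^ (Fintype.card ι * Fintype.card ι')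
      = ((∫⁻ t, ∫⁻ s, f (s, t) ∂P ∂Q) ^ Fintype.card ι) ^ Fintype.card ι' := by
        rw [lintegral_prod_symm _ hf.aemeasurable, pow_mul]
    _ ≤ (∫⁻ t, (∫⁻ s, f (s, t) ∂P) ^ Fintype.card ι ∂Q) ^ Fintype.card ι' :=
        pow_le_pow_left₀ zero_le (pow_lintegral_le_lintegral_pow
          (hf.comp measurable_swap).lintegral_prod_right'.aemeasurable _) _
    _ = (∫⁻ x, ∫⁻ t, ∏ i, f (x i, t) ∂Q ∂Measure.pi fun _ : ι => P) ^ Fintype.card ι' := by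
        rw [lintegral_lintegral_swap hrow.aemeasurable]
        exact congrArg (· ^ _) (lintegral_congr fun t =>
          (lintegral_pi_prod_comp_eval P (by fun_prop)).symm)
    _ ≤ ∫⁻ x, (∫⁻ t, ∏ i, f (x i, t) ∂Q) ^ Fintype.card ι' ∂Measure.pi fun _ : ι => P :=
        pow_lintegral_le_lintegral_pow hrow.lintegral_prod_right'.aemeasurable _
    _ = ∫⁻ z, ∏ p : ι × ι', f (z.1 p.1, z.2 p.2)
          ∂(Measure.pi fun _ : ι => P).prod (Measure.pi fun _ : ι' => Q) := by
        rw [lintegral_prod _ hall.aemeasurable]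
        refine lintegral_congr fun x => ?_
        rw [← lintegral_pi_prod_comp_eval Q (by fun_prop)]
        simp_rw [Fintype.prod_prod_type_right]

lemma Measure.pi_smul {ι Ω : Type*} [Fintype ι] [MeasurableSpace Ω] (μ : ι → Measure Ω)
    [∀ i, IsFiniteMeasure (μ i)] (c : ι → ℝ≥0∞) (hc : ∀ i, c i ≠ ∞) :
    Measure.pi (fun i => c i • μ i) = (∏ i, c i) • Measure.pi μ := by
  have (i : ι) : IsFiniteMeasure (c i • μ i) := by
    constructor
    simpa using ENNReal.mul_lt_top (hc i).lt_top (measure_lt_top (μ i) univ)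
  refine Measure.pi_eq fun s hs => ?_
  simp [Measure.pi_pi, Finset.prod_mul_distrib]

lemma Measure.map_pi_pair {ι Ω : Type*} [Fintype ι] [MeasurableSpace Ω] (μ : ι → Measure Ω)
    [∀ i, IsProbabilityMeasure (μ i)] {i j : ι} (hij : i ≠ j) :
    (Measure.pi μ).map (fun x => (x i, x j)) = (μ i).prod (μ j) := by
  have hind : IndepFun (fun x : ι → Ω => x i) (fun x => x j) (Measure.pi μ) :=
    (iIndepFun_pi (μ := μ) (X := fun _ => id) fun _ => aemeasurable_id).indepFun hij
  rw [hind.map_prod_eq_prod_map_map (measurable_pi_apply i).aemeasurable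
    (measurable_pi_apply j).aemeasurable, (measurePreserving_eval μ i).map_eq,
    (measurePreserving_eval μ j).map_eq]

lemma restrict_eq_smul_cond {α : Type*} [MeasurableSpace α] {μ : Measure α} {s : Set α}
    (h0 : μ s ≠ 0) (htop : μ s ≠ ∞) : μ.restrict s = μ s • μ[|s] := by
  rw [ProbabilityTheory.cond, smul_smul, ENNReal.mul_inv_cancel h0 htop, one_smul]

lemma cond_prod_cond {α β : Type*} [MeasurableSpace α] [MeasurableSpace β] {μ : Measure α}
    {ν : Measure β} [SFinite μ] [SFinite ν] {s : Set α} {t : Set β} (hs : μ s ≠ ∞)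
    (ht : ν t ≠ ∞) : (μ[|s]).prod (ν[|t]) = (μ.prod ν)[|s ×ˢ t] := by
  simp only [ProbabilityTheory.cond, Measure.prod_smul_left, Measure.prod_smul_right,
    Measure.prod_restrict, Measure.prod_prod, smul_smul]
  rw [ENNReal.mul_inv (Or.inr ht) (Or.inl hs), mul_comm]

lemma mul_cond_le_setLAverage {α : Type*} [MeasurableSpace α] {μ : Measure α} {S B : Set α}
    (hS : MeasurableSet S) {f : α → ℝ≥0∞} {c : ℝ≥0∞} (hf : ∀ x ∈ S, c ≤ f x) :
    c * μ[S | B] ≤ ⨍⁻ x in B, f x ∂μ := by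
  rw [setLAverage_eq', ← ProbabilityTheory.cond, ← lintegral_indicator_const hS]
  exact lintegral_mono (Set.indicator_le hf)

lemma exists_cond_prod_gt {S : Set (ℝ × ℝ)} {A B : Set ℝ} (hS : volume S ≠ 0)
    (hSAB : S ⊆ A ×ˢ B) (hA : MeasurableSet A) (hB : MeasurableSet B) {θ : ℝ≥0∞}
    (hθ : θ < 1) :
    ∃ I J : Set ℝ, MeasurableSet I ∧ MeasurableSet J ∧ I ⊆ A ∧ J ⊆ B ∧
      θ < volume[S | I ×ˢ J] := by
  have : (ae (volume.restrict S)).NeBot := ae_neBot.2 (Measure.restrict_eq_zero.not.2 hS)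
  -- a Lebesgue density point of `S`; balls in `ℝ × ℝ` (sup metric) are squares
  obtain ⟨z, hz⟩ := (Besicovitch.ae_tendsto_measure_inter_div volume S).exists
  obtain ⟨r, hθr⟩ := (hz.eventually (eventually_gt_nhds hθ)).exists
  refine ⟨A ∩ Icc (z.1 - r) (z.1 + r), B ∩ Icc (z.2 - r) (z.2 + r),
    hA.inter measurableSet_Icc, hB.inter measurableSet_Icc, inter_subset_left,
    inter_subset_left, ?_⟩
  have hbox : (A ∩ Icc (z.1 - r) (z.1 + r)) ×ˢ (B ∩ Icc (z.2 - r) (z.2 + r)) =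
      A ×ˢ B ∩ Metric.closedBall z r := by
    rw [← Set.prod_inter_prod, ← Real.closedBall_eq_Icc, ← Real.closedBall_eq_Icc,
      closedBall_prod_same]
  have hSbox : A ×ˢ B ∩ Metric.closedBall z r ∩ S = S ∩ Metric.closedBall z r := by
    rw [inter_comm, ← inter_assoc, inter_eq_left.2 hSAB]
  rw [cond_apply ((hA.inter measurableSet_Icc).prod (hB.inter measurableSet_Icc)), hbox, hSbox,
    mul_comm, ← div_eq_mul_inv]
  exact hθr.trans_le (ENNReal.div_le_div_left (measure_mono inter_subset_right) _)

lemma ae_le_of_forall_ae_lt {α : Type*} [MeasurableSpace α] {μ : Measure α} {f : α → ℝ}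
    {c : ℝ} (h : ∀ d, c < d → ∀ᵐ x ∂μ, f x < d) : ∀ᵐ x ∂μ, f x ≤ c := by
  have hn : ∀ᵐ x ∂μ, ∀ n : ℕ, f x < c + 1 / (n + 1) :=
    ae_all_iff.2 fun n => h _ (lt_add_of_pos_right c Nat.one_div_pos_of_nat)
  filter_upwards [hn] with x hx
  refine ge_of_tendsto (x := atTop) ?_ (Eventually.of_forall fun n => (hx n).le)
  simpa using tendsto_one_div_add_atTop_nhds_zero_nat.const_add c

lemma exists_pow_lt_mul_pow {a c d : ℝ} (ha : 0 < a) (hc : 0 ≤ c) (hcd : c < d) :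
    ∃ m : ℕ, c ^ (m * m) < a ^ m * d ^ (m * m) := by
  have hd : 0 < d := hc.trans_lt hcd
  obtain ⟨n, hn⟩ := exists_pow_lt_of_lt_one ha ((div_lt_one hd).2 hcd)
  have hlt : c ^ (n + 1) < a * d ^ (n + 1) := by
    have := (pow_le_pow_of_le_one (by positivity) ((div_lt_one hd).2 hcd).le
      n.le_succ).trans_lt hn
    rwa [div_pow, div_lt_iff₀ (by positivity)] at this
  refine ⟨n + 1, ?_⟩
  rw [pow_mul, pow_mul, ← mul_pow]
  exact pow_lt_pow_left₀ hlt (by positivity) (by omega)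

instance : IsProbabilityMeasure (volume.restrict (Icc (0:ℝ) 1)) :=
  ⟨by rw [Measure.restrict_apply_univ, Real.volume_Icc, sub_zero, ENNReal.ofReal_one]⟩

lemma edgeCount_congr {α β : Type*} {F : SimpleGraph α} {F' : SimpleGraph β} (e : F ≃g F') :
    edgeCount F = edgeCount F' :=
  Nat.card_congr e.mapEdgeSet

lemma edgeCount_eq_card_edgeFinset {α : Type*} [Fintype α] (F : SimpleGraph α) :
    edgeCount F = F.edgeFinset.card := by
  rw [edgeCount, Nat.card_coe_set_eq, ← SimpleGraph.coe_edgeFinset, Set.ncard_coe_finset]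

lemma injective_sym2_inl_inr (V W : Type*) :
    Function.Injective fun p : V × W => s(Sum.inl p.1, Sum.inr p.2) := by
  intro p q h
  simp only [Sym2.eq_iff, Sum.inl.injEq, Sum.inr.injEq, reduceCtorEq, and_false, or_false] at h
  exact Prod.ext h.1 h.2

lemma edgeFinset_completeBipartiteGraph (V W : Type*) [Fintype V] [Fintype W] :
    (completeBipartiteGraph V W).edgeFinset =
      Finset.univ.image fun p : V × W => s(Sum.inl p.1, Sum.inr p.2) := by
  apply Finset.coe_injective
  rw [SimpleGraph.coe_edgeFinset, SimpleGraph.edgeSet_completeBipartiteGraph, Finset.coe_image,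
    Finset.coe_univ, Set.image_univ]

lemma edgeCount_completeBipartiteGraph (V W : Type*) [Fintype V] [Fintype W] :
    edgeCount (completeBipartiteGraph V W) = Fintype.card V * Fintype.card W := by
  rw [edgeCount_eq_card_edgeFinset, edgeFinset_completeBipartiteGraph,
    Finset.card_image_of_injective _ (injective_sym2_inl_inr V W), Finset.card_univ,
    Fintype.card_prod]

noncomputable def edgeWeight {α : Type*} (κ : ℝ → ℝ → ℝ) (x : α → ℝ) :
    Sym2 α → ℝ≥0∞ :=
  Sym2.lift ⟨fun i j => ENNReal.ofReal ((κ (x i) (x j) + κ (x j) (x i)) / 2),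
    fun i j => by dsimp only; rw [add_comm (κ (x i) (x j)) (κ (x j) (x i))]⟩

section HomDensity

variable {κ : ℝ → ℝ → ℝ}

lemma homDensityL_eq_lintegral_edgeWeight {α : Type*} [Fintype α] (F : SimpleGraph α) :
    homDensityL F κ = ∫⁻ x in univ.pi (fun _ : α => Icc (0:ℝ) 1),
      ∏ e ∈ F.edgeFinset, edgeWeight κ x e := rfl

lemma edgeWeight_mk {α : Type*} (hsym : ∀ x y, κ x y = κ y x) (x : α → ℝ) (i j : α) :
    edgeWeight κ x s(i, j) = ENNReal.ofReal (κ (x i) (x j)) := by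
  simp [edgeWeight, hsym (x j) (x i)]

lemma edgeWeight_comp {α β : Type*} (x : β → ℝ) (f : α → β) (e : Sym2 α) :
    edgeWeight κ (x ∘ f) e = edgeWeight κ x (e.map f) := by
  induction e using Sym2.ind with
  | _ i j => rfl

lemma volume_restrict_cube {α : Type*} [Fintype α] :
    volume.restrict (univ.pi fun _ : α => Icc (0:ℝ) 1) =
      Measure.pi fun _ : α => volume.restrict (Icc (0:ℝ) 1) := by
  rw [volume_pi, Measure.restrict_pi_pi]

lemma homDensityL_congr {α β : Type*} [Fintype α] [Fintype β] {F : SimpleGraph α}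
    {F' : SimpleGraph β} (e : F ≃g F') : homDensityL F κ = homDensityL F' κ := by
  have hmp := measurePreserving_piCongrLeft (fun _ : β => volume.restrict (Icc (0:ℝ) 1))
    e.toEquiv
  rw [homDensityL_eq_lintegral_edgeWeight, homDensityL_eq_lintegral_edgeWeight,
    volume_restrict_cube, volume_restrict_cube, MeasurePreserving.lintegral_map_equiv _ _ hmp]
  refine lintegral_congr fun x => Finset.prod_nbij' (Sym2.map e) (Sym2.map e.symm)
    (fun s hs => by
      simpa [SimpleGraph.mem_edgeFinset] using
        e.map_mem_edgeSet_iff.2 (SimpleGraph.mem_edgeFinset.1 hs))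
    (fun s hs => by
      simpa [SimpleGraph.mem_edgeFinset] using
        e.symm.map_mem_edgeSet_iff.2 (SimpleGraph.mem_edgeFinset.1 hs))
    (fun s _ => by simp [Sym2.map_map]) (fun s _ => by simp [Sym2.map_map]) fun s _ => ?_
  have hx : (MeasurableEquiv.piCongrLeft (fun _ => ℝ) e.toEquiv x) ∘ e = x := by
    funext a
    exact MeasurableEquiv.piCongrLeft_apply_apply _ _ _
  rw [← edgeWeight_comp, hx]

lemma homDensityL_le_of_forall_fin {c : ℝ≥0∞}
    (h : ∀ (k : ℕ) (F : SimpleGraph (Fin k)), homDensityL F κ ≤ c ^ edgeCount F)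
    {α : Type*} [Fintype α] (F : SimpleGraph α) : homDensityL F κ ≤ c ^ edgeCount F := by
  have e := SimpleGraph.Iso.map (Fintype.equivFin α) F
  rw [homDensityL_congr e, edgeCount_congr e]
  exact h _ _

lemma homDensityL_le_of_ae_le (hsym : ∀ x y, κ x y = κ y x) {C : ℝ}
    (hae : ∀ᵐ q ∂(volume.restrict (Icc (0:ℝ) 1 ×ˢ Icc (0:ℝ) 1)), κ q.1 q.2 ≤ C)
    {α : Type*} [Fintype α] (F : SimpleGraph α) :
    homDensityL F κ ≤ ENNReal.ofReal C ^ edgeCount F := by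
  have hedge : ∀ e ∈ F.edgeFinset,
      ∀ᵐ x ∂Measure.pi fun _ : α => volume.restrict (Icc (0:ℝ) 1),
        edgeWeight κ x e ≤ ENNReal.ofReal C := by
    intro e he
    induction e using Sym2.ind with
    | _ i j =>
      have hij : i ≠ j := (SimpleGraph.mem_edgeFinset.1 he).ne
      rw [Measure.volume_eq_prod, ← Measure.prod_restrict,
        ← Measure.map_pi_pair (fun _ : α => volume.restrict (Icc (0:ℝ) 1)) hij] at hae
      filter_upwards [ae_of_ae_map (by fun_prop) hae] with x hx
      rw [edgeWeight_mk hsym]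
      exact ENNReal.ofReal_le_ofReal hx
  rw [homDensityL_eq_lintegral_edgeWeight, volume_restrict_cube, edgeCount_eq_card_edgeFinset]
  refine (lintegral_mono_ae (g := fun _ => ENNReal.ofReal C ^ F.edgeFinset.card) ?_).trans
    (by simp)
  filter_upwards [(eventually_all_finset _).2 hedge] with x hx
  exact Finset.prod_le_pow_card _ _ _ hx

lemma homDensityL_completeBipartiteGraph (hsym : ∀ x y, κ x y = κ y x)
    (V W : Type*) [Fintype V] [Fintype W] :
    homDensityL (completeBipartiteGraph V W) κ =
      ∫⁻ x in univ.pi (fun _ : V ⊕ W => Icc (0:ℝ) 1),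
        ∏ p : V × W, ENNReal.ofReal (κ (x (Sum.inl p.1)) (x (Sum.inr p.2))) := by
  rw [homDensityL_eq_lintegral_edgeWeight, edgeFinset_completeBipartiteGraph]
  simp_rw [Finset.prod_image fun p _ q _ h => injective_sym2_inl_inr V W h, edgeWeight_mk hsym]

lemma setLAverage_pow_le_homDensityL (hκ : Measurable (Function.uncurry κ))
    (hsym : ∀ x y, κ x y = κ y x) {I J : Set ℝ} (hI01 : I ⊆ Icc 0 1) (hJ01 : J ⊆ Icc 0 1)
    (hI0 : volume I ≠ 0) (hJ0 : volume J ≠ 0) (V W : Type*) [Fintype V] [Fintype W] :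
    volume I ^ Fintype.card V * volume J ^ Fintype.card W *
        (⨍⁻ q in I ×ˢ J, ENNReal.ofReal (κ q.1 q.2) ∂volume) ^
          (Fintype.card V * Fintype.card W) ≤
      homDensityL (completeBipartiteGraph V W) κ := by
  have hItop : volume I ≠ ∞ := ((measure_mono hI01).trans_lt measure_Icc_lt_top).ne
  have hJtop : volume J ≠ ∞ := ((measure_mono hJ01).trans_lt measure_Icc_lt_top).ne
  have := cond_isProbabilityMeasure_of_finite hI0 hItop
  have := cond_isProbabilityMeasure_of_finite hJ0 hJtop
  set box : V ⊕ W → Set ℝ := Sum.elim (fun _ => I) (fun _ => J)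
  set c : V ⊕ W → ℝ≥0∞ := Sum.elim (fun _ => volume I) (fun _ => volume J)
  set P : V ⊕ W → Measure ℝ := Sum.elim (fun _ => volume[|I]) (fun _ => volume[|J])
  have : ∀ i, IsProbabilityMeasure (P i) := fun i => by cases i <;> assumption
  have hc : ∀ i, c i ≠ ∞ := fun i => by cases i <;> assumption
  have hbox : (fun i => volume.restrict (box i)) = fun i => c i • P i := by
    funext i
    cases i
    · exact restrict_eq_smul_cond hI0 hItop
    · exact restrict_eq_smul_cond hJ0 hJtop
  calc volume I ^ Fintype.card V * volume J ^ Fintype.card W *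
        (⨍⁻ q in I ×ˢ J, ENNReal.ofReal (κ q.1 q.2) ∂volume) ^
          (Fintype.card V * Fintype.card W)
      ≤ (∏ i, c i) * ∫⁻ z, ∏ p : V × W, ENNReal.ofReal (κ (z.1 p.1) (z.2 p.2))
          ∂(Measure.pi fun _ : V => volume[|I]).prod (Measure.pi fun _ : W => volume[|J]) := by
        rw [Fintype.prod_sum_type]
        simp only [c, Sum.elim_inl, Sum.elim_inr, Finset.prod_const, Finset.card_univ]
        gcongr
        rw [setLAverage_eq', ← ProbabilityTheory.cond, Measure.volume_eq_prod,
          ← cond_prod_cond hItop hJtop]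
        exact pow_lintegral_le_lintegral_pi_prod _ _ (by fun_prop)
    _ = ∫⁻ x, ∏ p : V × W, ENNReal.ofReal (κ (x (Sum.inl p.1)) (x (Sum.inr p.2)))
          ∂Measure.pi fun i => volume.restrict (box i) := by
        rw [hbox, Measure.pi_smul _ _ hc, lintegral_smul_measure,
          MeasurePreserving.lintegral_map_equiv _ _ (measurePreserving_sumPiEquivProdPi_symm P),
          smul_eq_mul]
        rfl
    _ ≤ ∫⁻ x in univ.pi (fun _ : V ⊕ W => Icc (0:ℝ) 1),
          ∏ p : V × W, ENNReal.ofReal (κ (x (Sum.inl p.1)) (x (Sum.inr p.2))) := by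
        rw [← Measure.restrict_pi_pi, ← volume_pi]
        exact lintegral_mono_set (Set.pi_mono fun i _ => by cases i; exacts [hI01, hJ01])
    _ = homDensityL (completeBipartiteGraph V W) κ :=
        (homDensityL_completeBipartiteGraph hsym V W).symm

lemma ae_lt_of_homDensityL_completeBipartiteGraph_le (hκ : Measurable (Function.uncurry κ))
    (hsym : ∀ x y, κ x y = κ y x) {C : ℝ} (hC : 0 ≤ C)
    (h : ∀ m : ℕ, homDensityL (completeBipartiteGraph (Fin m) (Fin m)) κ ≤
      ENNReal.ofReal C ^ (m * m))
    {D : ℝ} (hCD : C < D) :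
    ∀ᵐ q ∂(volume.restrict (Icc (0:ℝ) 1 ×ˢ Icc (0:ℝ) 1)), κ q.1 q.2 < D := by
  have hsq : MeasurableSet (Icc (0:ℝ) 1 ×ˢ Icc (0:ℝ) 1) :=
    measurableSet_Icc.prod measurableSet_Icc
  by_contra hne
  set S := {q : ℝ × ℝ | D ≤ κ q.1 q.2} ∩ Icc (0:ℝ) 1 ×ˢ Icc (0:ℝ) 1
  have hSm : MeasurableSet S := (measurableSet_le measurable_const hκ).inter hsq
  have hS : volume S ≠ 0 := fun h0 => hne <| by
    rw [ae_iff, Measure.restrict_apply' hsq]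
    simpa only [not_lt] using h0
  have hD : 0 < D := hC.trans_lt hCD
  obtain ⟨t, hCt, ht1⟩ := exists_between ((div_lt_one hD).2 hCD)
  have ht : 0 < t := (div_nonneg hC hD.le).trans_lt hCt
  obtain ⟨I, J, -, -, hI01, hJ01, hθ⟩ := exists_cond_prod_gt hS inter_subset_right
    measurableSet_Icc measurableSet_Icc (ENNReal.ofReal_lt_one.2 ht1)
  have hIJ : volume I * volume J ≠ 0 := by
    rw [← Measure.prod_prod, ← Measure.volume_eq_prod]
    intro h0
    simp [cond_eq_zero_of_meas_eq_zero h0] at hθ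
  have hIJtop : volume I * volume J ≠ ∞ :=
    ENNReal.mul_ne_top ((measure_mono hI01).trans_lt measure_Icc_lt_top).ne
      ((measure_mono hJ01).trans_lt measure_Icc_lt_top).ne
  have havg : ENNReal.ofReal (D * t) ≤
      ⨍⁻ q in I ×ˢ J, ENNReal.ofReal (κ q.1 q.2) ∂volume := by
    rw [ENNReal.ofReal_mul hD.le]
    exact (mul_le_mul_right hθ.le _).trans <| mul_cond_le_setLAverage hSm
      fun q hq => ENNReal.ofReal_le_ofReal hq.1
  obtain ⟨m, hm⟩ := exists_pow_lt_mul_pow (ENNReal.toReal_pos hIJ hIJtop) hC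
    (show C < D * t from (div_lt_iff₀ hD).1 hCt |>.trans_eq (mul_comm t D))
  have hbound := setLAverage_pow_le_homDensityL hκ hsym hI01 hJ01 (left_ne_zero_of_mul hIJ)
    (right_ne_zero_of_mul hIJ) (Fin m) (Fin m)
  simp only [Fintype.card_fin] at hbound
  refine hm.not_ge ((ENNReal.ofReal_le_ofReal_iff (by positivity)).1 ?_)
  rw [ENNReal.ofReal_mul (by positivity), ENNReal.ofReal_pow (by positivity),
    ENNReal.ofReal_pow (by positivity), ENNReal.ofReal_pow hC, ENNReal.ofReal_toReal hIJtop,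
    mul_pow]
  calc _ ≤ _ := by gcongr
    _ ≤ _ := hbound
    _ ≤ _ := h m

end HomDensity

/-- A kernel `κ` satisfies `s(F,κ) ≤ C^{e(F)}` for every finite simple
graph `F` if and only if `κ ≤ C` almost everywhere on `[0,1]²`. -/
theorem bounded_kernel_iff_bounded_counts (κ : ℝ → ℝ → ℝ) (hκ : IsKernel κ)
    (C : ℝ) (hC : 0 ≤ C) :
    (∀ (k : ℕ) (F : SimpleGraph (Fin k)), homDensityL F κ ≤ ENNReal.ofReal C ^ edgeCount F) ↔
      ∀ᵐ q ∂(volume.restrict (Icc (0:ℝ) 1 ×ˢ Icc (0:ℝ) 1)), κ q.1 q.2 ≤ C := by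
  obtain ⟨hmeas, hsym, -⟩ := hκ
  refine ⟨fun h => ae_le_of_forall_ae_lt fun D hD => ?_,
    fun hae k F => homDensityL_le_of_ae_le hsym hae F⟩
  refine ae_lt_of_homDensityL_completeBipartiteGraph_le hmeas hsym hC (fun m => ?_) hD
  simpa [edgeCount_completeBipartiteGraph] using
    homDensityL_le_of_forall_fin h (completeBipartiteGraph (Fin m) (Fin m))
end

section
/- Let p : ℕ → (0,1] satisfy p(n)·n^{1/2} → ∞, and let (G_n) be a sequence of graphs with |G_n| = n such that t_p(K₂,G_n) → 1 and t_p(C₄,G_n) → 1 as n → ∞. Then t_p(C_k,G_n) → 1 as n → ∞ for each fixed k ≥ 5, where C_k denotes the cycle of length k. -/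
open MeasureTheory Set Filter
open scoped ENNReal Classical

/-!
Write `A` for the adjacency matrix of `G` and `λᵢ` for its eigenvalues, so that the number of
homomorphisms `C_k → G` is `tr A^k = ∑ λᵢ^k`. Let `λ₁` be the largest eigenvalue and
`a = λ₁ / (p n)`. The Rayleigh quotient of the all-ones vector gives `t_p(K₂, G) ≤ a`, while
`a⁴ ≤ t_p(C₄, G)`, so `a → 1`. The other eigenvalues contribute `∑_{i ≠ 1} λᵢ^k`, and
`|∑_{i ≠ 1} λᵢ^k|⁴ ≤ (∑_{i ≠ 1} λᵢ⁴)^k`; after normalisation the right-hand side is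
`(t_p(C₄, G) - a⁴)^k → 0`. Hence `t_p(C_k, G) = a^k + o(1) → 1`.
-/

open Matrix Topology

namespace Matrix
variable {V : Type*} [Fintype V] [DecidableEq V]

theorem pow_succ_apply_eq_sum_prod {R : Type*} [CommSemiring R] (A : Matrix V V R)
    (m : ℕ) (u v : V) :
    (A ^ (m + 1)) u v = ∑ g : Fin m → V,
      ∏ i, A (Fin.cons (α := fun _ => V) u g i) (Fin.snoc (α := fun _ => V) g v i) := by
  induction m generalizing u with
  | zero => simp [Fin.snoc]
  | succ m ih =>
    rw [pow_succ', mul_apply, ← (Fin.consEquiv fun _ => V).sum_comp, Fintype.sum_prod_type]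
    refine Finset.sum_congr rfl fun w _ => ?_
    rw [ih, Finset.mul_sum]
    refine Finset.sum_congr rfl fun g _ => ?_
    rw [Fin.prod_univ_succ (n := m + 1)]
    simp only [Fin.consEquiv, Equiv.coe_fn_mk, Fin.cons_zero, Fin.cons_succ,
      ← Fin.cons_snoc_eq_snoc_cons]

theorem trace_pow_succ_eq_sum_prod {R : Type*} [CommSemiring R] (A : Matrix V V R)
    (m : ℕ) : (A ^ (m + 1)).trace = ∑ g : Fin (m + 1) → V, ∏ i, A (g i) (g (i + 1)) := by
  rw [trace, ← (Fin.consEquiv fun _ => V).sum_comp, Fintype.sum_prod_type]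
  refine Finset.sum_congr rfl fun u _ => ?_
  rw [diag_apply, pow_succ_apply_eq_sum_prod]
  refine Finset.sum_congr rfl fun g _ => Finset.prod_congr rfl fun i _ => ?_
  congr 1
  induction i using Fin.lastCases with
  | last => simp [Fin.last_add_one]
  | cast j => simp [Fin.coeSucc_eq_succ]

theorem IsHermitian.trace_pow {A : Matrix V V ℝ} (hA : A.IsHermitian) (m : ℕ) :
    (A ^ m).trace = ∑ i, hA.eigenvalues i ^ m := by
  conv_lhs => rw [hA.spectral_theorem, ← map_pow, Unitary.conjStarAlgAut_apply, trace_mul_cycle,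
    Unitary.coe_star_mul_self, one_mul, diagonal_pow, trace_diagonal]
  simp

open scoped MatrixOrder in
theorem IsHermitian.dotProduct_mulVec_le {A : Matrix V V ℝ} (hA : A.IsHermitian) {c : ℝ}
    (hc : ∀ i, hA.eigenvalues i ≤ c) (x : V → ℝ) : x ⬝ᵥ A *ᵥ x ≤ c * (x ⬝ᵥ x) := by
  have hle : A ≤ algebraMap ℝ _ c := by
    refine le_algebraMap_of_spectrum_le (fun r hr => ?_) hA.isSelfAdjoint
    obtain ⟨i, rfl⟩ := hA.spectrum_real_eq_range_eigenvalues ▸ hr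
    exact hc i
  simpa [sub_mulVec, Algebra.algebraMap_eq_smul_one, smul_mulVec, dotProduct_smul] using
    (le_iff.mp hle).dotProduct_mulVec_nonneg x

end Matrix

theorem Finset.abs_sum_pow_pow_le {ι : Type*} {s : Finset ι} (x : ι → ℝ) {r k : ℕ} (hr : 0 < r)
    (hrk : r ≤ k) : |∑ i ∈ s, x i ^ k| ^ r ≤ (∑ i ∈ s, |x i| ^ r) ^ k := by
  rcases s.eq_empty_or_nonempty with rfl | hs
  · simp [zero_pow hr.ne']
  obtain ⟨j, hj, hjmax⟩ := s.exists_max_image (fun i => |x i|) hs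
  set Q := ∑ i ∈ s, |x i| ^ r
  have hjQ : |x j| ^ r ≤ Q :=
    Finset.single_le_sum (f := fun i => |x i| ^ r) (fun i _ => by positivity) hj
  have hsum : |∑ i ∈ s, x i ^ k| ≤ |x j| ^ (k - r) * Q := calc
    |∑ i ∈ s, x i ^ k| ≤ ∑ i ∈ s, |x i| ^ (k - r) * |x i| ^ r := by
      simp_rw [← pow_add, Nat.sub_add_cancel hrk, ← abs_pow]
      exact Finset.abs_sum_le_sum_abs _ _
    _ ≤ ∑ i ∈ s, |x j| ^ (k - r) * |x i| ^ r := by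
      refine Finset.sum_le_sum fun i hi => ?_
      exact mul_le_mul_of_nonneg_right (pow_le_pow_left₀ (abs_nonneg _) (hjmax i hi) _)
        (by positivity)
    _ = |x j| ^ (k - r) * Q := by rw [Finset.mul_sum]
  calc |∑ i ∈ s, x i ^ k| ^ r ≤ (|x j| ^ (k - r) * Q) ^ r := by gcongr
    _ = (|x j| ^ r) ^ (k - r) * Q ^ r := by rw [mul_pow, ← pow_mul, ← pow_mul, Nat.mul_comm]
    _ ≤ Q ^ (k - r) * Q ^ r := by gcongr
    _ = Q ^ k := by rw [← pow_add, Nat.sub_add_cancel hrk]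

theorem abs_sum_pow_sub_pow_pow_four_le {ι : Type*} [Fintype ι] [DecidableEq ι] (x : ι → ℝ)
    (i₀ : ι) {k : ℕ} (hk : 4 ≤ k) :
    |∑ i, x i ^ k - x i₀ ^ k| ^ 4 ≤ (∑ i, x i ^ 4 - x i₀ ^ 4) ^ k := by
  rw [← Finset.sum_erase_eq_sub (Finset.mem_univ i₀),
    ← Finset.sum_erase_eq_sub (Finset.mem_univ i₀)]
  simpa only [Even.pow_abs ⟨2, rfl⟩] using
    Finset.abs_sum_pow_pow_le (s := Finset.univ.erase i₀) x (by norm_num) hk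

namespace SimpleGraph
variable {V : Type*} (G : SimpleGraph V)

def cycleGraphHomEquiv (m : ℕ) :
    (cycleGraph (m + 2) →g G) ≃ {g : Fin (m + 2) → V // ∀ i, G.Adj (g i) (g (i + 1))} where
  toFun φ := ⟨φ, fun i => φ.map_rel (cycleGraph_adj.mpr (Or.inr (add_sub_cancel_left i 1)))⟩
  invFun g := ⟨g.1, fun {i j} hij => by
    rcases cycleGraph_adj.mp hij with h | h
    · obtain rfl := sub_eq_iff_eq_add'.mp h; exact (g.2 j).symm
    · obtain rfl := sub_eq_iff_eq_add'.mp h; exact g.2 i⟩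

theorem edgeCount_cycleGraph (m : ℕ) : edgeCount (cycleGraph (m + 3)) = m + 3 := by
  have h := sum_degrees_eq_twice_card_edges (cycleGraph (m + 3))
  simp only [cycleGraph_degree_three_le, Finset.sum_const, Finset.card_univ, Fintype.card_fin,
    smul_eq_mul] at h
  rw [edgeCount, Nat.card_eq_fintype_card, ← edgeFinset_card]
  omega

variable [Fintype V] [DecidableEq V] [DecidableRel G.Adj]

theorem natCast_homCount_cycleGraph {R : Type*} [CommSemiring R] (m : ℕ) :
    (homCount (cycleGraph (m + 2)) G : R) = (G.adjMatrix R ^ (m + 2)).trace := by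
  rw [homCount, Nat.card_congr (G.cycleGraphHomEquiv m), Nat.card_eq_fintype_card,
    Fintype.card_subtype, trace_pow_succ_eq_sum_prod]
  simp [adjMatrix_apply, Finset.prod_boole]

theorem trace_adjMatrix_sq {R : Type*} [CommSemiring R] :
    (G.adjMatrix R ^ 2).trace = G.adjMatrix R *ᵥ 1 ⬝ᵥ 1 := by
  rw [← natCast_card_dart_eq_dotProduct, dart_card_eq_sum_degrees, sq, trace, Nat.cast_sum]
  simp only [diag_apply, adjMatrix_mul_self_apply_self]

theorem exists_cycle_homCount_bounds :
    ∃ L : ℝ, (homCount (cycleGraph 2) G : ℝ) ≤ L * Fintype.card V ∧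
      L ^ 4 ≤ homCount (cycleGraph 4) G ∧
      ∀ k, 4 ≤ k → |(homCount (cycleGraph k) G : ℝ) - L ^ k| ^ 4 ≤
        ((homCount (cycleGraph 4) G : ℝ) - L ^ 4) ^ k := by
  have hA : (G.adjMatrix ℝ).IsHermitian := isHermitian_iff_isSymm.mpr G.isSymm_adjMatrix
  have htrace : ∀ k, 2 ≤ k → (homCount (cycleGraph k) G : ℝ) = ∑ i, hA.eigenvalues i ^ k := by
    intro k hk
    obtain ⟨m, rfl⟩ := Nat.exists_eq_add_of_le' hk
    rw [G.natCast_homCount_cycleGraph, hA.trace_pow]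
  rw [htrace 4 (by norm_num)]
  cases isEmpty_or_nonempty V
  · refine ⟨0, by simp [htrace 2 le_rfl], by simp, fun k hk => ?_⟩
    simp [htrace k (by omega), zero_pow (by omega : k ≠ 0)]
  obtain ⟨i₀, hi₀⟩ := Finite.exists_max hA.eigenvalues
  refine ⟨hA.eigenvalues i₀, ?_, ?_, fun k hk => ?_⟩
  · rw [htrace 2 le_rfl, ← hA.trace_pow, G.trace_adjMatrix_sq, dotProduct_comm]
    simpa using hA.dotProduct_mulVec_le hi₀ 1
  · exact Finset.single_le_sum (fun i _ => Even.pow_nonneg ⟨2, rfl⟩ _) (Finset.mem_univ i₀)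
  · rw [htrace k (by omega)]
    exact abs_sum_pow_sub_pow_pow_four_le _ i₀ hk

end SimpleGraph

section
variable {β : Type*} [Fintype β] (H : SimpleGraph β)

theorem tDen_nonneg {α : Type*} [Fintype α] {p : ℝ} (hp : 0 ≤ p) (F : SimpleGraph α) :
    0 ≤ tDen p F H := by
  unfold tDen
  positivity

theorem tDen_top_fin_two (p : ℝ) :
    tDen p (⊤ : SimpleGraph (Fin 2)) H =
      homCount (SimpleGraph.cycleGraph 2) H / (p * Fintype.card β) / Fintype.card β := by
  rw [tDen, SimpleGraph.cycleGraph_two_eq_top, edgeCount, Nat.card_eq_fintype_card,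
    ← SimpleGraph.edgeFinset_card, SimpleGraph.card_edgeFinset_top_eq_card_choose_two,
    Fintype.card_fin, Nat.choose_self, pow_one, div_div, mul_assoc, ← sq]

theorem tDen_cycleGraph (p : ℝ) (m : ℕ) :
    tDen p (SimpleGraph.cycleGraph (m + 3)) H =
      homCount (SimpleGraph.cycleGraph (m + 3)) H / (p * Fintype.card β) ^ (m + 3) := by
  rw [tDen, SimpleGraph.edgeCount_cycleGraph, Fintype.card_fin, mul_pow]

theorem exists_cycle_tDen_bounds {p : ℝ} (hp : 0 < p) :
    ∃ a : ℝ, tDen p (⊤ : SimpleGraph (Fin 2)) H ≤ a ∧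
      a ^ 4 ≤ tDen p (SimpleGraph.cycleGraph 4) H ∧
      ∀ k, 4 ≤ k → |tDen p (SimpleGraph.cycleGraph k) H - a ^ k| ^ 4 ≤
        (tDen p (SimpleGraph.cycleGraph 4) H - a ^ 4) ^ k := by
  obtain ⟨L, h₂, h₄, hₖ⟩ := H.exists_cycle_homCount_bounds
  have hd : 0 ≤ p * Fintype.card β := by positivity
  refine ⟨L / (p * Fintype.card β), ?_, ?_, fun k hk => ?_⟩
  · rw [tDen_top_fin_two]
    rcases (Nat.cast_nonneg (Fintype.card β) : (0 : ℝ) ≤ _).eq_or_lt with hN | hN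
    · simp [← hN] -- both sides are divisions by `0`
    rw [div_le_iff₀ hN, div_mul_eq_mul_div]
    exact div_le_div_of_nonneg_right h₂ hd
  · rw [tDen_cycleGraph H p 1, div_pow]
    exact div_le_div_of_nonneg_right h₄ (pow_nonneg hd 4)
  · obtain ⟨m, rfl⟩ : ∃ m, k = m + 3 := ⟨k - 3, by omega⟩
    rw [tDen_cycleGraph, tDen_cycleGraph H p 1, div_pow, div_pow, div_sub_div_same,
      div_sub_div_same, abs_div, abs_of_nonneg (pow_nonneg hd _), div_pow, div_pow, pow_right_comm]
    exact div_le_div_of_nonneg_right (hₖ _ hk) (pow_nonneg (pow_nonneg hd 4) _)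

end

theorem Filter.Tendsto.of_pow {α : Type*} {l : Filter α} {f : α → ℝ} {c : ℝ} {n : ℕ}
    (hn : n ≠ 0) (hc : 0 ≤ c) (hf : ∀ᶠ x in l, 0 ≤ f x)
    (h : Tendsto (fun x => f x ^ n) l (𝓝 (c ^ n))) : Tendsto f l (𝓝 c) := by
  have := h.rpow_const (p := (n : ℝ)⁻¹) (Or.inr (by positivity))
  rw [Real.pow_rpow_inv_natCast hc hn] at this
  exact this.congr' (hf.mono fun x hx => Real.pow_rpow_inv_natCast hx hn)

theorem tendsto_one_of_cycle_density_bounds {α : Type*} {l : Filter α} {t₂ t₄ t a : α → ℝ}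
    {k : ℕ} (hk : k ≠ 0) (h₂ : Tendsto t₂ l (𝓝 1)) (h₄ : Tendsto t₄ l (𝓝 1))
    (hbounds : ∀ᶠ x in l, 0 ≤ t₂ x ∧ t₂ x ≤ a x ∧ a x ^ 4 ≤ t₄ x ∧
      |t x - a x ^ k| ^ 4 ≤ (t₄ x - a x ^ 4) ^ k) :
    Tendsto t l (𝓝 1) := by
  have ha₄ : Tendsto (fun x => a x ^ 4) l (𝓝 1) := by
    refine tendsto_of_tendsto_of_tendsto_of_le_of_le' (by simpa using h₂.pow 4) h₄ ?_ ?_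
    · filter_upwards [hbounds] with x hx using pow_le_pow_left₀ hx.1 hx.2.1 4
    · filter_upwards [hbounds] with x hx using hx.2.2.1
  have ha : Tendsto a l (𝓝 1) :=
    .of_pow four_ne_zero zero_le_one (hbounds.mono fun x hx => hx.1.trans hx.2.1)
      (by simpa using ha₄)
  have hgap : Tendsto (fun x => (t₄ x - a x ^ 4) ^ k) l (𝓝 0) := by
    simpa [zero_pow hk] using (h₄.sub ha₄).pow k
  have hdiff₄ : Tendsto (fun x => |t x - a x ^ k| ^ 4) l (𝓝 0) :=
    tendsto_of_tendsto_of_tendsto_of_le_of_le' tendsto_const_nhds hgap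
      (.of_forall fun x => by positivity) (hbounds.mono fun x hx => hx.2.2.2)
  have hdiff : Tendsto (fun x => |t x - a x ^ k|) l (𝓝 0) :=
    .of_pow four_ne_zero le_rfl (.of_forall fun x => abs_nonneg _) (by simpa using hdiff₄)
  simpa using (ha.pow k).add ((tendsto_zero_iff_abs_tendsto_zero _).mpr hdiff)

theorem cycle_counts_from_K2_C4_general (p : ℕ → ℝ) (hp : ∀ n, p n ∈ Ioc (0:ℝ) 1)
    (G : ∀ n, SimpleGraph (Fin n))
    (hK2 : Tendsto (fun n => tDen (p n) (⊤ : SimpleGraph (Fin 2)) (G n)) atTop (nhds 1))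
    (hC4 : Tendsto (fun n => tDen (p n) (SimpleGraph.cycleGraph 4) (G n)) atTop (nhds 1)) :
    ∀ k : ℕ, 5 ≤ k →
      Tendsto (fun n => tDen (p n) (SimpleGraph.cycleGraph k) (G n)) atTop (nhds 1) := by
  intro k hk
  choose a ha₂ ha₄ haₖ using fun n => exists_cycle_tDen_bounds (G n) (hp n).1
  exact tendsto_one_of_cycle_density_bounds (by omega) hK2 hC4 (.of_forall fun n =>
    ⟨tDen_nonneg _ (hp n).1.le _, ha₂ n, ha₄ n, haₖ n k (by omega)⟩)

/-- If `p(n)·√n → ∞` and `t_p(K₂,G_n) → 1`, `t_p(C₄,G_n) → 1`, then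
`t_p(C_k,G_n) → 1` for each fixed `k ≥ 5`. -/
theorem cycle_counts_from_K2_C4 (p : ℕ → ℝ) (hp : ∀ n, p n ∈ Ioc (0:ℝ) 1)
    (hpn : Tendsto (fun n => p n * Real.sqrt n) atTop atTop)
    (G : ∀ n, SimpleGraph (Fin n))
    (hK2 : Tendsto (fun n => tDen (p n) (⊤ : SimpleGraph (Fin 2)) (G n)) atTop (nhds 1))
    (hC4 : Tendsto (fun n => tDen (p n) (SimpleGraph.cycleGraph 4) (G n)) atTop (nhds 1)) :
    ∀ k : ℕ, 5 ≤ k →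
      Tendsto (fun n => tDen (p n) (SimpleGraph.cycleGraph k) (G n)) atTop (nhds 1) :=
  cycle_counts_from_K2_C4_general p hp G hK2 hC4
end

section
/- Let p : ℕ → (0,1] be any function, let C > 0, let κ : [0,1]² → [0,C] be a kernel, and let (G_n) be a sequence of graphs with |G_n| = n and δ_□(G_n,κ) → 0. Then (G_n) has density bounded by C. -/
open MeasureTheory Set Filter
open scoped ENNReal Classical

/-!
Pick a measure-preserving `τ` with `‖κ_{G_n} - κ∘τ‖_□ < δε²`. For vertex sets `A, B` of size at
least `εn`, test the cut norm on the rectangle `S × T` formed by the intervals of the vertices of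
`A` and `B`: there `∫ κ_{G_n} = e(A,B)/(pn²)` while `∫ κ∘τ ≤ C|S||T| = C|A||B|/n²`, so
`e(A,B)/(pn²) ≤ δε² + C|A||B|/n² ≤ (C + δ)|A||B|/n²`.
-/

theorem volume_prod_le_one_of_subset_Icc {S T : Set ℝ} (hS : S ⊆ Icc 0 1) (hT : T ⊆ Icc 0 1) :
    volume (S ×ˢ T) ≤ 1 :=
  calc volume (S ×ˢ T) ≤ volume (Icc (0:ℝ) 1 ×ˢ Icc (0:ℝ) 1) := measure_mono (prod_mono hS hT)
    _ = 1 := by rw [Measure.volume_eq_prod, Measure.prod_prod]; simp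

theorem abs_setIntegral_prod_le_mul {W : ℝ × ℝ → ℝ} {M : ℝ} (hW : ∀ q, |W q| ≤ M)
    {S T : Set ℝ} (hS : S ⊆ Icc 0 1) (hT : T ⊆ Icc 0 1) :
    |∫ q in S ×ˢ T, W q| ≤ M * volume.real (S ×ˢ T) := by
  simpa only [Real.norm_eq_abs] using norm_setIntegral_le_of_norm_le_const (f := W)
    ((volume_prod_le_one_of_subset_Icc hS hT).trans_lt ENNReal.one_lt_top)
    fun q _ => by simpa only [Real.norm_eq_abs] using hW q

theorem abs_setIntegral_prod_le {W : ℝ → ℝ → ℝ} {M : ℝ} (hW : ∀ x y, |W x y| ≤ M)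
    {S T : Set ℝ} (hS : S ⊆ Icc 0 1) (hT : T ⊆ Icc 0 1) :
    |∫ q in S ×ˢ T, W q.1 q.2| ≤ M := by
  have hM : 0 ≤ M := (abs_nonneg _).trans (hW 0 0)
  have hvol : volume.real (S ×ˢ T) ≤ 1 := ENNReal.toReal_le_of_le_ofReal zero_le_one
    (by simpa using volume_prod_le_one_of_subset_Icc hS hT)
  calc |∫ q in S ×ˢ T, W q.1 q.2| ≤ M * volume.real (S ×ˢ T) :=
        abs_setIntegral_prod_le_mul (fun q => hW q.1 q.2) hS hT
    _ ≤ M := mul_le_of_le_one_right hM hvol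

theorem abs_setIntegral_prod_le_cutNorm {W : ℝ → ℝ → ℝ} {M : ℝ} (hW : ∀ x y, |W x y| ≤ M)
    {S T : Set ℝ} (hSm : MeasurableSet S) (hTm : MeasurableSet T)
    (hS : S ⊆ Icc 0 1) (hT : T ⊆ Icc 0 1) :
    |∫ q in S ×ˢ T, W q.1 q.2| ≤ cutNorm W := by
  refine le_csSup ⟨M, ?_⟩ ⟨S, T, hSm, hTm, hS, hT, rfl⟩
  rintro r ⟨S', T', -, -, hS', hT', rfl⟩
  exact abs_setIntegral_prod_le hW hS' hT'

theorem setIntegral_prod_le_cutNorm_sub_add {κ₁ κ₂ : ℝ → ℝ → ℝ} {M C : ℝ} {S T : Set ℝ}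
    (h₁ : IntegrableOn (fun q : ℝ × ℝ => κ₁ q.1 q.2) (S ×ˢ T)) (h₁M : ∀ x y, |κ₁ x y| ≤ M)
    (h₂ : Measurable (Function.uncurry κ₂)) (h₂C : ∀ x y, κ₂ x y ∈ Icc 0 C)
    (hSm : MeasurableSet S) (hTm : MeasurableSet T) (hS : S ⊆ Icc 0 1) (hT : T ⊆ Icc 0 1) :
    ∫ q in S ×ˢ T, κ₁ q.1 q.2 ≤
      cutNorm (fun x y => κ₁ x y - κ₂ x y) + C * (volume.real S * volume.real T) := by
  have h₂C' : ∀ x y, |κ₂ x y| ≤ C := fun x y => abs_le.2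
    ⟨by linarith [(h₂C x y).1, (h₂C x y).2], (h₂C x y).2⟩
  have h₂i : IntegrableOn (fun q : ℝ × ℝ => κ₂ q.1 q.2) (S ×ˢ T) :=
    .of_bound ((volume_prod_le_one_of_subset_Icc hS hT).trans_lt ENNReal.one_lt_top)
      h₂.aestronglyMeasurable C (ae_of_all _ fun q => h₂C' q.1 q.2)
  have hdiff : |∫ q in S ×ˢ T, (κ₁ q.1 q.2 - κ₂ q.1 q.2)| ≤
      cutNorm (fun x y => κ₁ x y - κ₂ x y) :=
    abs_setIntegral_prod_le_cutNorm (M := M + C)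
      (fun x y => (abs_sub _ _).trans (add_le_add (h₁M x y) (h₂C' x y))) hSm hTm hS hT
  have hκ₂ : ∫ q in S ×ˢ T, κ₂ q.1 q.2 ≤ C * (volume.real S * volume.real T) := by
    rw [← measureReal_prod_prod, ← Measure.volume_eq_prod]
    exact (le_abs_self _).trans (abs_setIntegral_prod_le_mul (fun q => h₂C' q.1 q.2) hS hT)
  rw [integral_sub h₁ h₂i] at hdiff
  linarith [(le_abs_self _).trans hdiff]

theorem exists_cutNorm_lt_of_cutDist_lt {κ₁ κ₂ : ℝ → ℝ → ℝ} {η : ℝ} (h : cutDist κ₁ κ₂ < η) :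
    ∃ τ, MPBij τ ∧ cutNorm (fun x y => κ₁ x y - κ₂ (τ x) (τ y)) < η := by
  have hne : {r | ∃ τ, MPBij τ ∧ r = cutNorm (fun x y => κ₁ x y - κ₂ (τ x) (τ y))}.Nonempty :=
    ⟨_, id, ⟨.id _, bijOn_id _⟩, rfl⟩
  obtain ⟨r, ⟨τ, hτ, rfl⟩, hr⟩ := exists_lt_of_csInf_lt hne h
  exact ⟨τ, hτ, hr⟩

def vtxInterval (n i : ℕ) : Set ℝ := Ioc ((i : ℝ) / n) (((i : ℝ) + 1) / n)

theorem idx_eq_of_mem_vtxInterval {n i : ℕ} {x : ℝ} (hx : x ∈ vtxInterval n i) :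
    idx n x = i := by
  rcases Nat.eq_zero_or_pos n with rfl | hn
  · simp [vtxInterval] at hx
  have hn' : (0 : ℝ) < n := Nat.cast_pos.2 hn
  obtain ⟨hlo, hhi⟩ := hx
  rw [div_lt_iff₀ hn'] at hlo
  rw [le_div_iff₀ hn'] at hhi
  have hceil : ⌈x * n⌉₊ = i + 1 := by
    rw [Nat.ceil_eq_iff i.succ_ne_zero]
    push_cast
    constructor <;> linarith
  simp [idx, hceil]

theorem vtxInterval_subset_Ioc {n i : ℕ} (hi : i < n) : vtxInterval n i ⊆ Ioc 0 1 := by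
  have hn : (0 : ℝ) < n := Nat.cast_pos.2 (i.zero_le.trans_lt hi)
  have hi' : (i : ℝ) + 1 ≤ n := by exact_mod_cast hi
  refine Ioc_subset_Ioc (div_nonneg i.cast_nonneg hn.le) ?_
  rwa [div_le_one hn]

theorem measurableSet_vtxInterval (n i : ℕ) : MeasurableSet (vtxInterval n i) :=
  measurableSet_Ioc

theorem measureReal_vtxInterval (n i : ℕ) : volume.real (vtxInterval n i) = 1 / n := by
  rw [vtxInterval, Real.volume_real_Ioc_of_le (by gcongr; linarith)]
  ring

theorem pairwise_disjoint_vtxInterval (n : ℕ) :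
    Pairwise fun i j => Disjoint (vtxInterval n i) (vtxInterval n j) := fun _ _ hij =>
  disjoint_left.2 fun _ hi hj =>
    hij ((idx_eq_of_mem_vtxInterval hi).symm.trans (idx_eq_of_mem_vtxInterval hj))

theorem pairwise_disjoint_vtxInterval_prod (n : ℕ) :
    Pairwise fun ij kl : Fin n × Fin n => Disjoint (vtxInterval n ij.1 ×ˢ vtxInterval n ij.2)
      (vtxInterval n kl.1 ×ˢ vtxInterval n kl.2) := by
  rintro ⟨i, j⟩ ⟨k, l⟩ hne
  rw [Set.disjoint_prod]
  by_cases hik : i = k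
  · exact .inr (pairwise_disjoint_vtxInterval n (Fin.val_injective.ne fun _ => hne (by simp_all)))
  · exact .inl (pairwise_disjoint_vtxInterval n (Fin.val_injective.ne hik))

theorem graphKernel_of_mem_vtxInterval {n : ℕ} (p : ℝ) (G : SimpleGraph (Fin n)) {i j : Fin n}
    {x y : ℝ} (hx : x ∈ vtxInterval n i) (hy : y ∈ vtxInterval n j) :
    graphKernel p G x y = if G.Adj i j then 1 / p else 0 := by
  have hxi := idx_eq_of_mem_vtxInterval hx
  have hyj := idx_eq_of_mem_vtxInterval hy
  have h : x ∈ Ioc (0:ℝ) 1 ∧ y ∈ Ioc (0:ℝ) 1 ∧ idx n x < n ∧ idx n y < n :=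
    ⟨vtxInterval_subset_Ioc i.isLt hx, vtxInterval_subset_Ioc j.isLt hy,
      hxi ▸ i.isLt, hyj ▸ j.isLt⟩
  rw [graphKernel, dif_pos h]
  congr 3

theorem abs_graphKernel_le {n : ℕ} (p : ℝ) (G : SimpleGraph (Fin n)) (x y : ℝ) :
    |graphKernel p G x y| ≤ |1 / p| := by
  unfold graphKernel
  split_ifs <;> simp

theorem measurableSet_vtxSet {n : ℕ} (X : Finset (Fin n)) : MeasurableSet (vtxSet n X) :=
  X.measurableSet_biUnion fun i _ => measurableSet_vtxInterval n i

theorem vtxSet_subset_Icc {n : ℕ} (X : Finset (Fin n)) : vtxSet n X ⊆ Icc 0 1 :=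
  iUnion₂_subset fun i _ => (vtxInterval_subset_Ioc i.isLt).trans Ioc_subset_Icc_self

theorem measureReal_vtxSet {n : ℕ} (X : Finset (Fin n)) :
    volume.real (vtxSet n X) = X.card / n := by
  change volume.real (⋃ i ∈ X, vtxInterval n i) = _
  rw [measureReal_biUnion_finset
    (fun i _ j _ hij => pairwise_disjoint_vtxInterval n (Fin.val_injective.ne hij))
    (fun i _ => measurableSet_vtxInterval n i) fun _ _ => measure_Ioc_lt_top.ne]
  simp_rw [measureReal_vtxInterval]
  simp [div_eq_mul_inv]

theorem vtxSet_prod_vtxSet {n : ℕ} (A B : Finset (Fin n)) :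
    vtxSet n A ×ˢ vtxSet n B = ⋃ ij ∈ A ×ˢ B, vtxInterval n ij.1 ×ˢ vtxInterval n ij.2 := by
  ext ⟨x, y⟩
  simp only [vtxSet, vtxInterval, mem_prod, mem_iUnion, exists_prop, Finset.mem_product,
    Prod.exists]
  tauto

theorem integrableOn_graphKernel_vtxInterval_prod {n : ℕ} (p : ℝ) (G : SimpleGraph (Fin n))
    (i j : Fin n) :
    IntegrableOn (fun q : ℝ × ℝ => graphKernel p G q.1 q.2)
      (vtxInterval n i ×ˢ vtxInterval n j) := by
  refine (integrableOn_const ?_).congr_fun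
    (fun q hq => (graphKernel_of_mem_vtxInterval p G hq.1 hq.2).symm)
    ((measurableSet_vtxInterval n i).prod (measurableSet_vtxInterval n j))
  rw [Measure.volume_eq_prod, Measure.prod_prod]
  exact ENNReal.mul_ne_top measure_Ioc_lt_top.ne measure_Ioc_lt_top.ne

theorem integrableOn_graphKernel_vtxSet {n : ℕ} (p : ℝ) (G : SimpleGraph (Fin n))
    (A B : Finset (Fin n)) :
    IntegrableOn (fun q : ℝ × ℝ => graphKernel p G q.1 q.2) (vtxSet n A ×ˢ vtxSet n B) := by
  rw [vtxSet_prod_vtxSet, integrableOn_finset_iUnion]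
  exact fun ij _ => integrableOn_graphKernel_vtxInterval_prod p G ij.1 ij.2

theorem setIntegral_graphKernel_vtxSet {n : ℕ} (p : ℝ) (G : SimpleGraph (Fin n))
    (A B : Finset (Fin n)) :
    ∫ q in vtxSet n A ×ˢ vtxSet n B, graphKernel p G q.1 q.2 = ePairs G A B / (p * n ^ 2) := by
  have hpiece : ∀ i j : Fin n,
      ∫ q in vtxInterval n i ×ˢ vtxInterval n j, graphKernel p G q.1 q.2 =
        (if G.Adj i j then 1 / p else 0) / n ^ 2 := by
    intro i j
    rw [setIntegral_congr_fun
      ((measurableSet_vtxInterval n i).prod (measurableSet_vtxInterval n j))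
      (fun q hq => graphKernel_of_mem_vtxInterval p G hq.1 hq.2), setIntegral_const,
      Measure.volume_eq_prod, measureReal_prod_prod, measureReal_vtxInterval,
      measureReal_vtxInterval, smul_eq_mul]
    ring
  rw [vtxSet_prod_vtxSet, integral_biUnion_finset _
    (fun ij _ => (measurableSet_vtxInterval n ij.1).prod (measurableSet_vtxInterval n ij.2))
    (fun _ _ _ _ hne => pairwise_disjoint_vtxInterval_prod n hne)
    fun ij _ => integrableOn_graphKernel_vtxInterval_prod p G ij.1 ij.2]
  simp_rw [hpiece]
  rw [← Finset.sum_div, Finset.sum_ite, Finset.sum_const_zero, add_zero, Finset.sum_const,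
    nsmul_eq_mul, ePairs]
  ring

theorem dDens_le_add_of_ePairs_div_le {n : ℕ} {p ε δ C : ℝ} {G : SimpleGraph (Fin n)}
    {A B : Finset (Fin n)} (hn : 0 < n) (hp : 0 < p) (hε : 0 < ε) (hδ : 0 ≤ δ)
    (hA : ε * n ≤ A.card) (hB : ε * n ≤ B.card)
    (h : ePairs G A B / (p * n ^ 2) ≤ δ * ε ^ 2 + C * (A.card / n * (B.card / n))) :
    dDens p G A B ≤ C + δ := by
  have hn' : (0 : ℝ) < n := Nat.cast_pos.2 hn
  have hA' : 0 < (A.card : ℝ) := (mul_pos hε hn').trans_le hA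
  have hB' : 0 < (B.card : ℝ) := (mul_pos hε hn').trans_le hB
  have hAB : (ε * n) ^ 2 ≤ A.card * B.card := by
    rw [sq]; exact mul_le_mul hA hB (mul_pos hε hn').le hA'.le
  rw [div_le_iff₀ (by positivity)] at h
  rw [dDens, div_le_iff₀ (by positivity)]
  calc (ePairs G A B : ℝ) ≤ (δ * ε ^ 2 + C * (A.card / n * (B.card / n))) * (p * n ^ 2) := h
    _ = p * (δ * (ε * n) ^ 2 + C * (A.card * B.card)) := by field_simp
    _ ≤ p * (δ * (A.card * B.card) + C * (A.card * B.card)) := by gcongr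
    _ = (C + δ) * (p * A.card * B.card) := by ring

theorem cut_convergence_bounded_density_general (p : ℕ → ℝ) (hp : ∀ n, p n ∈ Ioc (0:ℝ) 1)
    (C : ℝ) (κ : ℝ → ℝ → ℝ) (hκ : IsKernelBdd κ C)
    (G : ∀ n, SimpleGraph (Fin n))
    (hconv : Tendsto (fun n => cutDist (graphKernel (p n) (G n)) κ) atTop (nhds 0)) :
    DensityBoundedBy p G C := by
  obtain ⟨hκm, -, hκC⟩ := hκ
  intro ε hε δ hδ
  filter_upwards [hconv.eventually (gt_mem_nhds (by positivity : 0 < δ * ε ^ 2)),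
    eventually_gt_atTop 0] with n hdist hn A B hA hB
  obtain ⟨τ, hτ, hcut⟩ := exists_cutNorm_lt_of_cutDist_lt hdist
  have hκτ : Measurable (Function.uncurry fun x y => κ (τ x) (τ y)) :=
    hκm.comp (hτ.1.measurable.prodMap hτ.1.measurable)
  have key := setIntegral_prod_le_cutNorm_sub_add (integrableOn_graphKernel_vtxSet _ _ A B)
    (abs_graphKernel_le (p n) (G n)) hκτ (fun x y => hκC (τ x) (τ y))
    (measurableSet_vtxSet A) (measurableSet_vtxSet B) (vtxSet_subset_Icc A) (vtxSet_subset_Icc B)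
  rw [setIntegral_graphKernel_vtxSet, measureReal_vtxSet, measureReal_vtxSet] at key
  exact dDens_le_add_of_ePairs_div_le hn (hp n).1 hε hδ.le hA hB (by linarith)

/-- If `δ_□(G_n,κ) → 0` for a kernel `κ` with values in `[0,C]`, then
`(G_n)` has density bounded by `C`. -/
theorem cut_convergence_bounded_density (p : ℕ → ℝ) (hp : ∀ n, p n ∈ Ioc (0:ℝ) 1)
    (C : ℝ) (hC : 0 < C) (κ : ℝ → ℝ → ℝ) (hκ : IsKernelBdd κ C)
    (G : ∀ n, SimpleGraph (Fin n))
    (hconv : Tendsto (fun n => cutDist (graphKernel (p n) (G n)) κ) atTop (nhds 0)) :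
    DensityBoundedBy p G C :=
  cut_convergence_bounded_density_general p hp C κ hκ G hconv
end

section
/- Let C > 0, let κ₁ and κ₂ be kernels taking values in [0,C], and let t ≥ 1 be an odd integer. If κ₁^t(x,y) = κ₂^t(x,y) for almost every (x,y) ∈ [0,1]², then κ₁(x,y) = κ₂(x,y) for almost every (x,y) ∈ [0,1]². -/
open MeasureTheory Set Filter
open scoped ENNReal Classical

/-!
A bounded symmetric kernel `κ` acts on `L²([0,1]; ℂ)` as a bounded self-adjoint integral operator
`T_κ`, and `T_{κ^t} = T_κ ^ t` by Fubini. For odd `t` the map `x ↦ x ^ t` is an order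
automorphism of `ℝ`, so applying its inverse through the continuous functional calculus recovers
`T_κ` from `T_κ ^ t`. Finally `T_κ` determines `κ` almost everywhere: integrating `T_κ 1_T`
over `S` gives the integral of `κ` over the rectangle `S × T`, and rectangles form a generating
π-system of the product σ-algebra.
-/

open Function
open scoped ComplexConjugate

lemma Odd.surjective_pow_real {t : ℕ} (ht : Odd t) : Surjective fun x : ℝ => x ^ t :=
  (continuous_pow t).surjective (tendsto_pow_atTop ht.pos.ne') (by
    have := tendsto_neg_atTop_atBot.comp
      ((tendsto_pow_atTop (α := ℝ) ht.pos.ne').comp tendsto_neg_atBot_atTop)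
    simpa [Function.comp_def, ht.neg_pow] using this)

lemma IsSelfAdjoint.eq_of_pow_eq_pow_of_odd {A : Type*} [CStarAlgebra A] {a b : A}
    (ha : IsSelfAdjoint a) (hb : IsSelfAdjoint b) {t : ℕ} (ht : Odd t) (h : a ^ t = b ^ t) :
    a = b := by
  let root : ℝ ≃o ℝ :=
    StrictMono.orderIsoOfSurjective _ ht.strictMono_pow ht.surjective_pow_real
  have hroot : ∀ c : A, IsSelfAdjoint c → cfc (root.symm : ℝ → ℝ) (c ^ t) = c := fun c hc => by
    rw [← cfc_comp_pow (root.symm : ℝ → ℝ) t c root.symm.continuous.continuousOn]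
    simpa [root] using cfc_id' ℝ c
  rw [← hroot a ha, h, hroot b hb]

noncomputable section

variable {α : Type*} [MeasurableSpace α]

namespace MeasureTheory.Lp

variable {E : Type*} [NormedAddCommGroup E] {μ : Measure α} [IsFiniteMeasure μ]

lemma integrable {p : ℝ≥0∞} [Fact (1 ≤ p)] (f : Lp E p μ) : Integrable f μ :=
  (Lp.memLp f).integrable Fact.out

lemma integral_norm_le_norm_mul_rpow_measure_univ (f : Lp E 2 μ) :
    ∫ x, ‖f x‖ ∂μ ≤ ‖f‖ * μ.real univ ^ (1 / 2 : ℝ) := by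
  have h := eLpNorm_le_eLpNorm_mul_rpow_measure_univ (p := 1) (q := 2) (by norm_num)
    (Lp.aestronglyMeasurable f)
  rw [integral_norm_eq_lintegral_enorm (Lp.aestronglyMeasurable f),
    ← eLpNorm_one_eq_lintegral_enorm, Lp.norm_def, measureReal_def, ENNReal.toReal_rpow,
    ← ENNReal.toReal_mul]
  refine ENNReal.toReal_mono (ENNReal.mul_ne_top (Lp.eLpNorm_ne_top f) ?_) ?_
  · exact ENNReal.rpow_ne_top_of_nonneg (by norm_num) (measure_ne_top μ univ)
  · convert h using 3; norm_num

end MeasureTheory.Lp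

structure IsBoundedKernel (κ : α → α → ℝ) : Prop where
  measurable : Measurable (uncurry κ)
  exists_bound : ∃ D, 0 ≤ D ∧ ∀ x y, |κ x y| ≤ D

def kernelApply (μ : Measure α) (κ : α → α → ℝ) (f : α → ℂ) (x : α) : ℂ :=
  ∫ y, (κ x y : ℂ) * f y ∂μ

def kernelComp (μ : Measure α) (κ₁ κ₂ : α → α → ℝ) (x y : α) : ℝ :=
  ∫ z, κ₁ x z * κ₂ z y ∂μ

variable {μ : Measure α} {κ κ₁ κ₂ : α → α → ℝ} {f g : α → ℂ}

lemma kernelApply_congr_ae (h : f =ᵐ[μ] g) : kernelApply μ κ f = kernelApply μ κ g :=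
  funext fun _ => integral_congr_ae (h.mono fun y hy => by simp only [hy])

lemma kernelApply_smul (c : ℂ) : kernelApply μ κ (c • f) = c • kernelApply μ κ f := by
  funext x
  simp only [kernelApply, Pi.smul_apply, smul_eq_mul, ← integral_const_mul, mul_left_comm]

lemma norm_kernelApply_le {D : ℝ} (hD : ∀ x y, |κ x y| ≤ D) (hf : Integrable f μ) (x : α) :
    ‖kernelApply μ κ f x‖ ≤ D * ∫ y, ‖f y‖ ∂μ := by
  rw [← integral_const_mul]
  refine (norm_integral_le_integral_norm _).trans
    (integral_mono_of_nonneg (ae_of_all _ fun _ => norm_nonneg _) (hf.norm.const_mul D)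
      (ae_of_all _ fun y => ?_))
  simp only [norm_mul, Complex.norm_real, Real.norm_eq_abs]
  exact mul_le_mul_of_nonneg_right (hD x y) (norm_nonneg _)

namespace IsBoundedKernel

lemma measurable_ofReal (hκ : IsBoundedKernel κ) :
    Measurable fun p : α × α => (κ p.1 p.2 : ℂ) :=
  Complex.measurable_ofReal.comp hκ.measurable

protected lemma flip (hκ : IsBoundedKernel κ) : IsBoundedKernel (flip κ) where
  measurable := hκ.measurable.comp measurable_swap
  exists_bound := let ⟨D, hD0, hD⟩ := hκ.exists_bound; ⟨D, hD0, fun x y => hD y x⟩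

lemma integrable_uncurry [IsFiniteMeasure μ] (hκ : IsBoundedKernel κ) :
    Integrable (fun p : α × α => κ p.1 p.2) (μ.prod μ) :=
  let ⟨D, _, hD⟩ := hκ.exists_bound
  .of_bound hκ.measurable.aestronglyMeasurable D (ae_of_all _ fun p => hD p.1 p.2)

lemma integrable_section [IsFiniteMeasure μ] (hκ : IsBoundedKernel κ) (x : α) :
    Integrable (κ x) μ :=
  let ⟨D, _, hD⟩ := hκ.exists_bound
  .of_bound (hκ.measurable.comp measurable_prodMk_left).aestronglyMeasurable D
    (ae_of_all _ (hD x))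

lemma integrable_mul (hκ : IsBoundedKernel κ) (hf : Integrable f μ) (x : α) :
    Integrable (fun y => (κ x y : ℂ) * f y) μ :=
  let ⟨D, _, hD⟩ := hκ.exists_bound
  hf.bdd_mul (hκ.measurable_ofReal.comp measurable_prodMk_left).aestronglyMeasurable
    (ae_of_all _ fun y => by simpa [Complex.norm_real] using hD x y)

lemma kernelApply_add (hκ : IsBoundedKernel κ) (hf : Integrable f μ) (hg : Integrable g μ) :
    kernelApply μ κ (f + g) = kernelApply μ κ f + kernelApply μ κ g := by
  funext x
  simp only [kernelApply, Pi.add_apply, mul_add]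
  exact integral_add (hκ.integrable_mul hf x) (hκ.integrable_mul hg x)

lemma memLp_kernelApply [IsFiniteMeasure μ] (hκ : IsBoundedKernel κ) (hf : Integrable f μ)
    (p : ℝ≥0∞) : MemLp (kernelApply μ κ f) p μ := by
  obtain ⟨D, -, hD⟩ := hκ.exists_bound
  refine .of_bound ?_ _ (ae_of_all _ (norm_kernelApply_le hD hf))
  exact (hκ.measurable_ofReal.aestronglyMeasurable.mul
    (hf.1.comp_quasiMeasurePreserving Measure.quasiMeasurePreserving_snd)).integral_prod_right'

lemma comp [IsFiniteMeasure μ] (h₁ : IsBoundedKernel κ₁) (h₂ : IsBoundedKernel κ₂) :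
    IsBoundedKernel (kernelComp μ κ₁ κ₂) where
  measurable :=
    ((h₁.measurable.comp (measurable_fst.fst.prodMk measurable_snd)).mul
      (h₂.measurable.comp (measurable_snd.prodMk measurable_fst.snd))).stronglyMeasurable
      |>.integral_prod_right'.measurable
  exists_bound := by
    obtain ⟨D₁, hD₁0, hD₁⟩ := h₁.exists_bound
    obtain ⟨D₂, hD₂0, hD₂⟩ := h₂.exists_bound
    refine ⟨D₁ * D₂ * μ.real univ, by positivity, fun x y => ?_⟩
    refine norm_integral_le_of_norm_le_const (μ := μ) (f := fun z => κ₁ x z * κ₂ z y)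
      (ae_of_all _ fun z => ?_)
    rw [Real.norm_eq_abs, abs_mul]
    exact mul_le_mul (hD₁ x z) (hD₂ z y) (abs_nonneg _) hD₁0

end IsBoundedKernel

section Operator

variable (μ) in
def IsBoundedKernel.integralLinearMap [IsFiniteMeasure μ] (hκ : IsBoundedKernel κ) :
    Lp ℂ 2 μ →ₗ[ℂ] Lp ℂ 2 μ where
  toFun f := (hκ.memLp_kernelApply (Lp.integrable f) 2).toLp _
  map_add' f g := by
    rw [← MemLp.toLp_add]
    refine MemLp.toLp_congr _ _ (EventuallyEq.of_eq ?_)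
    rw [kernelApply_congr_ae (Lp.coeFn_add f g),
      hκ.kernelApply_add (Lp.integrable f) (Lp.integrable g)]
  map_smul' c f := by
    rw [RingHom.id_apply, ← MemLp.toLp_const_smul]
    refine MemLp.toLp_congr _ _ (EventuallyEq.of_eq ?_)
    rw [kernelApply_congr_ae (Lp.coeFn_smul c f), kernelApply_smul]

lemma IsBoundedKernel.exists_norm_integralLinearMap_le [IsFiniteMeasure μ]
    (hκ : IsBoundedKernel κ) :
    ∃ C, ∀ f, ‖hκ.integralLinearMap μ f‖ ≤ C * ‖f‖ := by
  obtain ⟨D, hD0, hD⟩ := hκ.exists_bound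
  refine ⟨measureUnivNNReal μ ^ (2 : ℝ≥0∞).toReal⁻¹ * D * μ.real univ ^ (1 / 2 : ℝ),
    fun f => ?_⟩
  have hL1 := Lp.integral_norm_le_norm_mul_rpow_measure_univ f
  refine (Lp.norm_le_of_ae_bound (C := D * ∫ y, ‖f y‖ ∂μ) (by positivity) ?_).trans ?_
  · filter_upwards [MemLp.coeFn_toLp (hκ.memLp_kernelApply (Lp.integrable f) 2)]
      with x hx
    exact hx ▸ norm_kernelApply_le hD (Lp.integrable f) x
  · calc _ ≤ (measureUnivNNReal μ : ℝ) ^ (2 : ℝ≥0∞).toReal⁻¹ *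
          (D * (‖f‖ * μ.real univ ^ (1 / 2 : ℝ))) := by gcongr
      _ = _ := by ring

variable (μ κ) in
/-- Kernels that are not bounded and measurable are sent to `0`. -/
def integralOperator [IsFiniteMeasure μ] : Lp ℂ 2 μ →L[ℂ] Lp ℂ 2 μ :=
  if hκ : IsBoundedKernel κ then
    (hκ.integralLinearMap μ).mkContinuousOfExistsBound hκ.exists_norm_integralLinearMap_le
  else 0

variable [IsFiniteMeasure μ]

lemma integralOperator_apply (hκ : IsBoundedKernel κ) (f : Lp ℂ 2 μ) :
    integralOperator μ κ f =ᵐ[μ] kernelApply μ κ f := by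
  rw [integralOperator, dif_pos hκ, LinearMap.mkContinuousOfExistsBound_apply]
  exact MemLp.coeFn_toLp (hκ.memLp_kernelApply (Lp.integrable f) 2)

lemma integralOperator_congr_ae {κ' : α → α → ℝ} (hκ : IsBoundedKernel κ)
    (hκ' : IsBoundedKernel κ') (h : ∀ᵐ p ∂μ.prod μ, κ p.1 p.2 = κ' p.1 p.2) :
    integralOperator μ κ = integralOperator μ κ' := by
  ext1 f
  refine Lp.ext ((integralOperator_apply hκ f).trans (EventuallyEq.trans ?_
    (integralOperator_apply hκ' f).symm))
  filter_upwards [Measure.ae_ae_of_ae_prod h] with x hx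
  exact integral_congr_ae (hx.mono fun y hy => by simp only [hy])


lemma IsBoundedKernel.kernelApply_kernelComp (h₁ : IsBoundedKernel κ₁) (h₂ : IsBoundedKernel κ₂)
    (hf : Integrable f μ) :
    kernelApply μ (kernelComp μ κ₁ κ₂) f = kernelApply μ κ₁ (kernelApply μ κ₂ f) := by
  funext x
  obtain ⟨D₁, hD₁0, hD₁⟩ := h₁.exists_bound
  obtain ⟨D₂, -, hD₂⟩ := h₂.exists_bound
  have hint : Integrable (uncurry fun y z => (κ₁ x y : ℂ) * ((κ₂ y z : ℂ) * f z)) (μ.prod μ) := by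
    refine (((integrable_const (1 : ℂ)).mul_prod hf).bdd_mul (c := D₁ * D₂)
      (f := fun p : α × α => (κ₁ x p.1 : ℂ) * κ₂ p.1 p.2) ?_ (ae_of_all _ fun p => ?_)).congr
      (ae_of_all _ fun p => by simp only [uncurry, one_mul, mul_assoc])
    · exact ((h₁.measurable_ofReal.comp (measurable_const.prodMk measurable_fst)).mul
        h₂.measurable_ofReal).aestronglyMeasurable
    · simp only [norm_mul, Complex.norm_real, Real.norm_eq_abs]
      exact mul_le_mul (hD₁ x p.1) (hD₂ p.1 p.2) (abs_nonneg _) hD₁0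
  calc kernelApply μ (kernelComp μ κ₁ κ₂) f x
      = ∫ z, ∫ y, (κ₁ x y : ℂ) * ((κ₂ y z : ℂ) * f z) ∂μ ∂μ := by
        refine integral_congr_ae (ae_of_all _ fun z => ?_)
        dsimp only
        rw [kernelComp, ← integral_complex_ofReal, ← integral_mul_const]
        exact integral_congr_ae (ae_of_all _ fun y => by push_cast; ring)
    _ = ∫ y, ∫ z, (κ₁ x y : ℂ) * ((κ₂ y z : ℂ) * f z) ∂μ ∂μ := (integral_integral_swap hint).symm
    _ = _ := by simp only [kernelApply, integral_const_mul]

lemma integralOperator_kernelComp (h₁ : IsBoundedKernel κ₁) (h₂ : IsBoundedKernel κ₂) :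
    integralOperator μ (kernelComp μ κ₁ κ₂) = integralOperator μ κ₁ * integralOperator μ κ₂ := by
  ext1 f
  refine Lp.ext ((integralOperator_apply (h₁.comp h₂) f).trans ?_)
  rw [h₁.kernelApply_kernelComp h₂ (Lp.integrable f),
    ← kernelApply_congr_ae (integralOperator_apply h₂ f)]
  exact (integralOperator_apply h₁ _).symm

lemma IsBoundedKernel.integral_mul_conj_kernelApply (hκ : IsBoundedKernel κ)
    (hf : Integrable f μ) (hg : Integrable g μ) :
    ∫ x, g x * conj (kernelApply μ κ f x) ∂μ = ∫ y, kernelApply μ (flip κ) g y * conj (f y) ∂μ := by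
  obtain ⟨D, -, hD⟩ := hκ.exists_bound
  have hfc : Integrable (fun y => conj (f y)) μ :=
    hf.mono (Complex.continuous_conj.comp_aestronglyMeasurable hf.1) (ae_of_all _ fun y => by simp)
  have hint : Integrable (uncurry fun x y => g x * ((κ x y : ℂ) * conj (f y))) (μ.prod μ) := by
    refine ((hg.mul_prod hfc).bdd_mul (c := D) hκ.measurable_ofReal.aestronglyMeasurable
      (ae_of_all _ fun p => by simpa [Complex.norm_real] using hD p.1 p.2)).congr
      (ae_of_all _ fun p => by simp only [uncurry]; ring)
  calc ∫ x, g x * conj (kernelApply μ κ f x) ∂μ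
      = ∫ x, ∫ y, g x * ((κ x y : ℂ) * conj (f y)) ∂μ ∂μ := by
        refine integral_congr_ae (ae_of_all _ fun x => ?_)
        simp only [kernelApply, ← integral_conj, map_mul, Complex.conj_ofReal, integral_const_mul]
    _ = ∫ y, ∫ x, g x * ((κ x y : ℂ) * conj (f y)) ∂μ ∂μ := integral_integral_swap hint
    _ = _ := by
        refine integral_congr_ae (ae_of_all _ fun y => ?_)
        simp only [kernelApply, flip, ← integral_mul_const]
        exact integral_congr_ae (ae_of_all _ fun x => by ring)

lemma adjoint_integralOperator (hκ : IsBoundedKernel κ) :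
    ContinuousLinearMap.adjoint (integralOperator μ κ) = integralOperator μ (flip κ) := by
  refine ((ContinuousLinearMap.eq_adjoint_iff _ _).2 fun f g => ?_).symm
  simp only [L2.inner_def, RCLike.inner_apply]
  calc ∫ x, g x * conj (integralOperator μ (flip κ) f x) ∂μ
      = ∫ x, g x * conj (kernelApply μ (flip κ) f x) ∂μ := by
        refine integral_congr_ae ?_
        filter_upwards [integralOperator_apply hκ.flip f] with x hx
        rw [hx]
    _ = ∫ y, kernelApply μ κ g y * conj (f y) ∂μ :=
        hκ.flip.integral_mul_conj_kernelApply (Lp.integrable f) (Lp.integrable g)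
    _ = ∫ y, integralOperator μ κ g y * conj (f y) ∂μ := by
        refine integral_congr_ae ?_
        filter_upwards [integralOperator_apply hκ g] with x hx
        rw [hx]

lemma isSelfAdjoint_integralOperator (hκ : IsBoundedKernel κ) (hsymm : ∀ x y, κ x y = κ y x) :
    IsSelfAdjoint (integralOperator μ κ) := by
  rw [IsSelfAdjoint, ContinuousLinearMap.star_eq_adjoint, adjoint_integralOperator hκ,
    show flip κ = κ from funext₂ fun x y => hsymm y x]

lemma integralOperator_indicatorConstLp (hκ : IsBoundedKernel κ) {T : Set α}
    (hT : MeasurableSet T) :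
    integralOperator μ κ (indicatorConstLp 2 hT (measure_ne_top μ T) 1) =ᵐ[μ]
      fun x => ((∫ y in T, κ x y ∂μ : ℝ) : ℂ) := by
  refine (integralOperator_apply hκ _).trans (EventuallyEq.of_eq ?_)
  rw [kernelApply_congr_ae indicatorConstLp_coeFn]
  funext x
  rw [← integral_complex_ofReal, ← integral_indicator hT]
  exact integral_congr_ae (ae_of_all _ fun y => by by_cases hy : y ∈ T <;> simp [hy])

lemma IsBoundedKernel.setLIntegral_prod_ofReal (hκ : IsBoundedKernel κ)
    (hκ0 : ∀ x y, 0 ≤ κ x y) (S : Set α) {T : Set α} :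
    ∫⁻ p in S ×ˢ T, ENNReal.ofReal (κ p.1 p.2) ∂μ.prod μ =
      ∫⁻ x in S, ENNReal.ofReal (∫ y in T, κ x y ∂μ) ∂μ := by
  rw [setLIntegral_prod (fun p : α × α => ENNReal.ofReal (κ p.1 p.2))
    (ENNReal.measurable_ofReal.comp hκ.measurable).aemeasurable]
  refine lintegral_congr fun x => ?_
  exact (ofReal_integral_eq_lintegral_ofReal (hκ.integrable_section x).integrableOn
    (ae_of_all _ (hκ0 x))).symm

theorem ae_eq_of_integralOperator_eq (h₁ : IsBoundedKernel κ₁) (h₂ : IsBoundedKernel κ₂)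
    (h₁0 : ∀ x y, 0 ≤ κ₁ x y) (h₂0 : ∀ x y, 0 ≤ κ₂ x y)
    (h : integralOperator μ κ₁ = integralOperator μ κ₂) :
    ∀ᵐ p ∂μ.prod μ, κ₁ p.1 p.2 = κ₂ p.1 p.2 := by
  have hsection : ∀ T, MeasurableSet T →
      ∀ᵐ x ∂μ, ∫ y in T, κ₁ x y ∂μ = ∫ y in T, κ₂ x y ∂μ := fun T hT => by
    have h₁T := integralOperator_indicatorConstLp (μ := μ) h₁ hT
    rw [h] at h₁T
    filter_upwards [h₁T, integralOperator_indicatorConstLp h₂ hT] with x hx₁ hx₂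
    exact_mod_cast hx₁.symm.trans hx₂
  have hofReal : (fun p : α × α => ENNReal.ofReal (κ₁ p.1 p.2)) =ᵐ[μ.prod μ]
      fun p => ENNReal.ofReal (κ₂ p.1 p.2) := by
    refine ae_eq_of_setLIntegral_prod_eq
      (ENNReal.measurable_ofReal.comp h₁.measurable).aemeasurable
      (ENNReal.measurable_ofReal.comp h₂.measurable).aemeasurable
      h₁.integrable_uncurry.lintegral_lt_top.ne fun S _ T hT => ?_
    rw [h₁.setLIntegral_prod_ofReal h₁0, h₂.setLIntegral_prod_ofReal h₂0]
    exact setLIntegral_congr_fun_ae ‹_› ((hsection T hT).mono fun x hx _ => by rw [hx])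
  filter_upwards [hofReal] with p hp
  exact (ENNReal.ofReal_eq_ofReal_iff (h₁0 _ _) (h₂0 _ _)).1 hp

end Operator
end

lemma IsKernelBdd.isBoundedKernel {κ : ℝ → ℝ → ℝ} {C : ℝ} (h : IsKernelBdd κ C) :
    IsBoundedKernel κ where
  measurable := h.1
  exists_bound := ⟨C, (h.2.2 0 0).1.trans (h.2.2 0 0).2, fun x y => by
    rw [abs_of_nonneg (h.2.2 x y).1]; exact (h.2.2 x y).2⟩

lemma isBoundedKernel_kpow {κ : ℝ → ℝ → ℝ} (hκ : IsBoundedKernel κ) :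
    ∀ n, IsBoundedKernel (kpow κ n)
  | 0 => ⟨measurable_const, 0, le_rfl, fun _ _ => by simp [kpow]⟩
  | 1 => hκ
  | n + 2 => (isBoundedKernel_kpow hκ (n + 1)).comp (μ := volume.restrict (Icc 0 1)) hκ

lemma integralOperator_kpow {κ : ℝ → ℝ → ℝ} (hκ : IsBoundedKernel κ) {n : ℕ} (hn : n ≠ 0) :
    integralOperator (volume.restrict (Icc (0 : ℝ) 1)) (kpow κ n) =
      integralOperator (volume.restrict (Icc (0 : ℝ) 1)) κ ^ n := by
  induction n with
  | zero => contradiction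
  | succ n ih =>
    rcases n with _ | n
    · rw [zero_add, pow_one]; rfl
    · rw [pow_succ, ← ih n.succ_ne_zero,
        ← integralOperator_kernelComp (isBoundedKernel_kpow hκ _) hκ]
      rfl

theorem odd_kernel_power_determines_general (C : ℝ)
    (κ₁ κ₂ : ℝ → ℝ → ℝ) (h₁ : IsKernelBdd κ₁ C) (h₂ : IsKernelBdd κ₂ C)
    (t : ℕ) (hodd : Odd t)
    (hpow : ∀ᵐ q ∂(volume.restrict (Icc (0:ℝ) 1 ×ˢ Icc (0:ℝ) 1)),
      kpow κ₁ t q.1 q.2 = kpow κ₂ t q.1 q.2) :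
    ∀ᵐ q ∂(volume.restrict (Icc (0:ℝ) 1 ×ˢ Icc (0:ℝ) 1)), κ₁ q.1 q.2 = κ₂ q.1 q.2 := by
  rw [Measure.volume_eq_prod, ← Measure.prod_restrict] at hpow ⊢
  have hk₁ := h₁.isBoundedKernel
  have hk₂ := h₂.isBoundedKernel
  refine ae_eq_of_integralOperator_eq hk₁ hk₂ (fun x y => (h₁.2.2 x y).1)
    (fun x y => (h₂.2.2 x y).1) ?_
  refine (isSelfAdjoint_integralOperator hk₁ h₁.2.1).eq_of_pow_eq_pow_of_odd
    (isSelfAdjoint_integralOperator hk₂ h₂.2.1) hodd ?_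
  rw [← integralOperator_kpow hk₁ hodd.pos.ne', ← integralOperator_kpow hk₂ hodd.pos.ne']
  exact integralOperator_congr_ae (isBoundedKernel_kpow hk₁ t) (isBoundedKernel_kpow hk₂ t) hpow

/-- If `κ₁^t = κ₂^t` a.e. for bounded kernels and odd `t`, then
`κ₁ = κ₂` a.e. -/
theorem odd_kernel_power_determines (C : ℝ) (hC : 0 < C)
    (κ₁ κ₂ : ℝ → ℝ → ℝ) (h₁ : IsKernelBdd κ₁ C) (h₂ : IsKernelBdd κ₂ C)
    (t : ℕ) (ht : 1 ≤ t) (hodd : Odd t)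
    (hpow : ∀ᵐ q ∂(volume.restrict (Icc (0:ℝ) 1 ×ˢ Icc (0:ℝ) 1)),
      kpow κ₁ t q.1 q.2 = kpow κ₂ t q.1 q.2) :
    ∀ᵐ q ∂(volume.restrict (Icc (0:ℝ) 1 ×ˢ Icc (0:ℝ) 1)), κ₁ q.1 q.2 = κ₂ q.1 q.2 :=
  odd_kernel_power_determines_general C κ₁ κ₂ h₁ h₂ t hodd hpow
end
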